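/- arXiv:hep-th/0404183 — 7 statements merged into one kernel-verified Lean document; each statement's English description precedes it below -/
import Mathlib

section
/- For any elements b_1, …, b_k ∈ B satisfying the compatibility condition ∂_i(b_j) = ∂_j(b_i) for all 1 ≤ i, j ≤ k, there exists an element b ∈ B such that ∂_s(b) = b_s for all 1 ≤ s ≤ k. -/
/-- Auxiliary: powers of a commuting linear map commute with another. -/
lemma aux_pow_comm {B : Type*} [Ring B] [Algebra ℂ B]
    (D E : B →ₗ[ℂ] B) (h : ∀ x, D (E x) = E (D x)) :
    ∀ (m : ℕ) (x : B), D ((E ^ m) x) = (E ^ m) (D x) := by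
  intro m
  induction m with
  | zero => intro x; simp
  | succ m ih =>
    intro x
    rw [pow_succ, Module.End.mul_apply, Module.End.mul_apply, ih, h]

/-- Auxiliary: local nilpotency passes to products for a derivation. -/
lemma aux_mul_nilp {B : Type*} [Ring B] [Algebra ℂ B]
    (D : B →ₗ[ℂ] B) (hl : ∀ x y, D (x * y) = D x * y + x * D y) :
    ∀ (N a c : ℕ) (x y : B), a + c = N → (D ^ a) x = 0 → (D ^ c) y = 0 →
      (D ^ N) (x * y) = 0 := by
  intro N
  induction N with
  | zero =>
    rintro a c x y habc hx hy
    have ha : a = 0 := by omega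
    subst ha
    simp only [pow_zero, Module.End.one_apply] at hx
    subst hx
    simp
  | succ N ih =>
    rintro a c x y habc hx hy
    match a, c with
    | 0, c =>
      simp only [pow_zero, Module.End.one_apply] at hx
      subst hx
      simp
    | a + 1, 0 =>
      simp only [pow_zero, Module.End.one_apply] at hy
      subst hy
      simp
    | a + 1, c + 1 =>
      have hstep : (D ^ (N + 1)) (x * y) = (D ^ N) (D (x * y)) := by
        rw [pow_succ, Module.End.mul_apply]
      rw [hstep, hl, map_add]
      have hx' : (D ^ a) (D x) = 0 := by
        rw [← Module.End.mul_apply, ← pow_succ]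
        exact hx
      have hy' : (D ^ c) (D y) = 0 := by
        rw [← Module.End.mul_apply, ← pow_succ]
        exact hy
      have h1 : (D ^ N) (D x * y) = 0 := ih a (c + 1) (D x) y (by omega) hx' hy
      have h2 : (D ^ N) (x * D y) = 0 := ih (a + 1) c x (D y) (by omega) hx hy'
      rw [h1, h2, add_zero]

/-- in the same context, any family `b₁, …, b_k ∈ B` with
`∂ i (b j) = ∂ j (b i)` for all `i, j` is of the form `b s = ∂ s b` for a single `b ∈ B`. -/
theorem statement3
    (B : Type*) [Ring B] [Algebra ℂ B]
    (n k : ℕ) (hk : k ≤ n)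
    (Bgen : Fin n → B)
    (hgen : Algebra.adjoin ℂ (Set.range Bgen) = ⊤)
    (der : Fin k → (B →ₗ[ℂ] B))
    (hleib : ∀ (s : Fin k) (x y : B), der s (x * y) = der s x * y + x * der s y)
    (hcomm : ∀ (s t : Fin k) (x : B), der s (der t x) = der t (der s x))
    (hval : ∀ (s : Fin k) (j : Fin n),
      der s (Bgen j) = if (s : ℕ) = (j : ℕ) then 1 else 0)
    (b : Fin k → B)
    (hb : ∀ i j : Fin k, der i (b j) = der j (b i)) :
    ∃ x : B, ∀ s : Fin k, der s x = b s := by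
  classical
  -- derivations kill 1
  have hD1 : ∀ s : Fin k, der s 1 = 0 := by
    intro s
    have h := hleib s 1 1
    simp only [one_mul, mul_one] at h
    exact (left_eq_add.mp h)
  -- monotonicity of vanishing of powers
  have hmono : ∀ (s : Fin k) (N M : ℕ) (x : B), N ≤ M →
      ((der s) ^ N) x = 0 → ((der s) ^ M) x = 0 := by
    intro s N M x h hx
    obtain ⟨d, rfl⟩ := Nat.exists_eq_add_of_le h
    rw [add_comm, pow_add, Module.End.mul_apply, hx, map_zero]
  -- local nilpotency
  have hnil : ∀ (s : Fin k) (x : B), ∃ N, ((der s) ^ N) x = 0 := by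
    intro s x
    have hx : x ∈ Algebra.adjoin ℂ (Set.range Bgen) := by rw [hgen]; trivial
    induction hx using Algebra.adjoin_induction with
    | mem z hz =>
      obtain ⟨j, rfl⟩ := hz
      refine ⟨2, ?_⟩
      have h2 : ((der s) ^ 2) (Bgen j) = der s (der s (Bgen j)) := by
        rw [pow_two, Module.End.mul_apply]
      rw [h2, hval]
      by_cases h : (s : ℕ) = (j : ℕ)
      · rw [if_pos h]; exact hD1 s
      · rw [if_neg h]; exact map_zero _
    | algebraMap r =>
      refine ⟨1, ?_⟩
      have h1 : (algebraMap ℂ B) r = r • (1 : B) := Algebra.algebraMap_eq_smul_one r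
      rw [pow_one, h1, map_smul, hD1, smul_zero]
    | add z w hz hw ihz ihw =>
      obtain ⟨N, hN⟩ := ihz
      obtain ⟨M, hM⟩ := ihw
      exact ⟨max N M, by
        rw [map_add, hmono s N (max N M) z (le_max_left _ _) hN,
          hmono s M (max N M) w (le_max_right _ _) hM, add_zero]⟩
    | mul z w hz hw ihz ihw =>
      obtain ⟨N, hN⟩ := ihz
      obtain ⟨M, hM⟩ := ihw
      exact ⟨N + M, aux_mul_nilp (der s) (hleib s) (N + M) N M z w rfl hN hM⟩
  -- derivative of powers of a slice
  have hpow_t : ∀ (s : Fin k) (t : B), der s t = 1 →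
      ∀ j : ℕ, der s (t ^ (j + 1)) = (j + 1) • t ^ j := by
    intro s t ht j
    induction j with
    | zero => simpa using ht
    | succ j ih =>
      rw [pow_succ, hleib, ih, ht, mul_one, smul_mul_assoc, ← pow_succ,
        succ_nsmul (t ^ (j + 1)) (j + 1)]
  -- derivative of powers of a constant
  have hpow_zero : ∀ (r : Fin k) (t : B), der r t = 0 →
      ∀ j : ℕ, der r (t ^ j) = 0 := by
    intro r t ht j
    induction j with
    | zero => simpa using hD1 r
    | succ j ih => rw [pow_succ, hleib, ih, ht, zero_mul, mul_zero, add_zero]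
  -- the integration lemma
  have hint : ∀ (s : Fin k) (x : B), ∃ u : B,
      der s u = x ∧ ∀ r : Fin k, r ≠ s → der r x = 0 → der r u = 0 := by
    intro s x
    obtain ⟨N, hN⟩ := hnil s x
    set j : Fin n := Fin.castLE hk s with hj
    have hjs : ((j : ℕ)) = (s : ℕ) := rfl
    set t : B := Bgen j with htdef
    have ht : der s t = 1 := by rw [htdef, hval, if_pos hjs.symm]
    have htr : ∀ r : Fin k, r ≠ s → der r t = 0 := by
      intro r hr
      rw [htdef, hval, if_neg]
      rw [hjs]
      exact fun h => hr (Fin.ext h)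
    refine ⟨∑ m ∈ Finset.range N,
        ((-1 : ℂ) ^ m * ((Nat.factorial (m + 1) : ℂ))⁻¹) •
          (t ^ (m + 1) * (((der s) ^ m) x)), ?_, ?_⟩
    · -- der s of the sum is x
      rw [map_sum]
      set d : ℕ → B := fun m =>
        ((-1 : ℂ) ^ m * ((Nat.factorial m : ℂ))⁻¹) • (t ^ m * (((der s) ^ m) x))
        with hd
      have hterm : ∀ m ∈ Finset.range N,
          der s (((-1 : ℂ) ^ m * ((Nat.factorial (m + 1) : ℂ))⁻¹) •
            (t ^ (m + 1) * (((der s) ^ m) x))) = d m - d (m + 1) := by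
        intro m _
        have hcomp : der s ((((der s) ^ m)) x) = (((der s) ^ (m + 1))) x := by
          rw [pow_succ', Module.End.mul_apply]
        rw [map_smul, hleib, hpow_t s t ht m, hcomp, hd]
        simp only
        rw [smul_mul_assoc, ← Nat.cast_smul_eq_nsmul ℂ (m + 1)]
        have hfac : ((Nat.factorial m : ℂ)) ≠ 0 :=
          Nat.cast_ne_zero.mpr (Nat.factorial_ne_zero m)
        have hfac1 : ((Nat.factorial (m + 1) : ℂ)) ≠ 0 :=
          Nat.cast_ne_zero.mpr (Nat.factorial_ne_zero (m + 1))
        have hfs : ((Nat.factorial (m + 1) : ℂ)) =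
            ((m : ℂ) + 1) * (Nat.factorial m : ℂ) := by
          rw [Nat.factorial_succ]
          push_cast
          ring
        match_scalars
        · rw [hfs]
          have hm1 : ((m : ℂ) + 1) ≠ 0 := Nat.cast_add_one_ne_zero m
          have hprod : ((m : ℂ) + 1) * (Nat.factorial m : ℂ) ≠ 0 := mul_ne_zero hm1 hfac
          field_simp
        · ring
      rw [Finset.sum_congr rfl hterm, Finset.sum_range_sub' d N, hd]
      simp only
      rw [hN, mul_zero, smul_zero, sub_zero]
      simp
    · -- other derivations kill the sum
      intro r hrs hx0
      rw [map_sum]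
      refine Finset.sum_eq_zero fun m _ => ?_
      rw [map_smul, hleib, hpow_zero r t (htr r hrs) (m + 1), zero_mul, zero_add,
        aux_pow_comm (der r) (der s) (fun z => hcomm r s z) m x, hx0, map_zero,
        mul_zero, smul_zero]
  -- main induction
  have key : ∀ m : ℕ, m ≤ k → ∃ X : B, ∀ r : Fin k, (r : ℕ) < m → der r X = b r := by
    intro m
    induction m with
    | zero => exact fun _ => ⟨0, fun r hr => absurd hr (Nat.not_lt_zero _)⟩
    | succ m ih =>
      intro hm1
      obtain ⟨X, hX⟩ := ih (Nat.le_of_succ_le hm1)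
      set s : Fin k := ⟨m, hm1⟩ with hs
      obtain ⟨u, hu1, hu2⟩ := hint s (b s - der s X)
      refine ⟨X + u, fun r hr => ?_⟩
      rcases Nat.lt_succ_iff_lt_or_eq.mp hr with h | h
      · have hrs : r ≠ s := by
          intro he
          rw [he] at h
          exact absurd h (lt_irrefl m)
        have hry : der r (b s - der s X) = 0 := by
          rw [map_sub, hb r s, hcomm r s X, hX r h, sub_self]
        rw [map_add, hX r h, hu2 r hrs hry, add_zero]
      · have hr' : r = s := Fin.ext h
        rw [hr', map_add, hu1]
        abel
  obtain ⟨X, hX⟩ := key k le_rfl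
  exact ⟨X, fun s => hX s s.isLt⟩
end

section
/- Let V = ℂ^k with standard basis e_1, …, e_k, and for each i ≥ 0 let d_i : B ⊗ Λ^i V → B ⊗ Λ^{i+1} V be the ℂ-linear map determined by d_i(b ⊗ ω) = Σ_{s=1}^k ∂_s(b) ⊗ (e_s ∧ ω). Then: d_{i+1} ∘ d_i = 0 for all i ≥ 0; the kernel of d_0 equals G^0 ⊗ Λ^0 V (so the degree-0 cohomology is isomorphic to G^0 = ⋂_{s=1}^k ker ∂_s); and for every i ≥ 1 the kernel of d_i equals the image of d_{i−1}. In other words, the cohomology of the complex (B ⊗ Λ^•V, d) is concentrated in degree 0, where it is isomorphic to G^0. -/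
/-!
Each `∂ s` is locally nilpotent, since the Leibniz rule propagates this from the generators, and
`xₛ := B_s` has `∂ s xₛ = 1` and `∂ t xₛ = 0` for `t ≠ s`. Hence
`Jₛ b = ∑ⱼ (-1)ʲ xₛʲ⁺¹ ∂ₛʲ b / (j+1)!` is a right inverse of `∂ s` commuting with every other `∂ t`.

The complex embeds into `B ⊗ ΛV`, with differential `D = ∑ₛ Dₛ`, `Dₛ = ∂ₛ ⊗ (eₛ ∧ ·)`. Let `cₛ` be
contraction with `eₛ*`, `hₛ = Jₛ ⊗ cₛ` and `πₛ = (1 - Jₛ ∂ₛ) ⊗ cₛ (eₛ ∧ ·)`. Then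
`Dₛ hₛ + hₛ Dₛ = 1 - πₛ` and `Dₛ πₛ = πₛ Dₛ = 0`, while operators with different indices
(anti)commute; so `H = ∑ₜ π₀ ⋯ πₜ₋₁ hₜ` satisfies `D H + H D = 1 - π₀ ⋯ πₖ₋₁`. That last operator
kills every form of positive degree, which gives exactness in degrees `≥ 1`. In degree `0`, the
coefficient of `eₛ` in `D (b ⊗ 1)` is `∂ₛ b`.
-/

open TensorProduct

/-- Left wedge multiplication by a vector, `x ∧ ω`, as a map `⋀^i V → ⋀^{i+1} V`. -/
noncomputable def wedgeCons {k : ℕ} (i : ℕ) (x : Fin k → ℂ)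
    (ω : ⋀[ℂ]^i (Fin k → ℂ)) : ⋀[ℂ]^(i + 1) (Fin k → ℂ) :=
  ⟨ExteriorAlgebra.ι ℂ x * (ω : ExteriorAlgebra ℂ (Fin k → ℂ)), by
    have h : (⋀[ℂ]^(i + 1) (Fin k → ℂ)) =
        LinearMap.range (ExteriorAlgebra.ι ℂ :
          (Fin k → ℂ) →ₗ[ℂ] ExteriorAlgebra ℂ (Fin k → ℂ)) * ⋀[ℂ]^i (Fin k → ℂ) :=
      pow_succ' _ _
    rw [h]
    exact Submodule.mul_mem_mul (LinearMap.mem_range_self _ x) ω.2⟩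

section LocallyNilpotent

variable {K : Type*} [CommRing K] {B : Type*} [Ring B] [Algebra K B] {δ : B →ₗ[K] B}

theorem map_one_eq_zero_of_leibniz (hleib : ∀ x y, δ (x * y) = δ x * y + x * δ y) :
    δ 1 = 0 := by
  simpa using hleib 1 1

theorem pow_apply_eq_zero_of_le {m m' : ℕ} (h : m ≤ m') {b : B} (hb : (δ ^ m) b = 0) :
    (δ ^ m') b = 0 := by
  rw [← Nat.sub_add_cancel h, pow_add, Module.End.mul_apply, hb, map_zero]

theorem pow_add_apply_mul_eq_zero (hleib : ∀ x y, δ (x * y) = δ x * y + x * δ y)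
    {a c : ℕ} {y z : B} (hy : (δ ^ a) y = 0) (hz : (δ ^ c) z = 0) :
    (δ ^ (a + c)) (y * z) = 0 := by
  induction a generalizing c y z with
  | zero => simp_all
  | succ a iha =>
    induction c generalizing z with
    | zero => simp_all
    | succ c ihc =>
      rw [pow_succ, Module.End.mul_apply] at hy
      have hz' : (δ ^ c) (δ z) = 0 := by rwa [pow_succ, Module.End.mul_apply] at hz
      rw [show a + 1 + (c + 1) = a + (c + 1) + 1 by omega, pow_succ, Module.End.mul_apply,
        hleib, map_add, iha hy hz, zero_add, show a + (c + 1) = a + 1 + c by omega]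
      exact ihc hz'

variable (δ) in
def locallyNilpotentSubalgebra (hleib : ∀ x y, δ (x * y) = δ x * y + x * δ y) :
    Subalgebra K B where
  carrier := {b | ∃ m, (δ ^ m) b = 0}
  mul_mem' := fun ⟨a, ha⟩ ⟨c, hc⟩ => ⟨a + c, pow_add_apply_mul_eq_zero hleib ha hc⟩
  add_mem' := fun ⟨a, ha⟩ ⟨c, hc⟩ => ⟨max a c, by
    rw [map_add, pow_apply_eq_zero_of_le (le_max_left a c) ha,
      pow_apply_eq_zero_of_le (le_max_right a c) hc, add_zero]⟩
  algebraMap_mem' r := ⟨1, by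
    rw [pow_one, Algebra.algebraMap_eq_smul_one, map_smul, map_one_eq_zero_of_leibniz hleib,
      smul_zero]⟩

theorem exists_pow_apply_eq_zero_of_adjoin_eq_top {ι : Type*} {gen : ι → B}
    (hgen : Algebra.adjoin K (Set.range gen) = ⊤) (hleib : ∀ x y, δ (x * y) = δ x * y + x * δ y)
    (hgen_nil : ∀ j, ∃ m, (δ ^ m) (gen j) = 0) (b : B) : ∃ m, (δ ^ m) b = 0 := by
  have hle : Algebra.adjoin K (Set.range gen) ≤ locallyNilpotentSubalgebra δ hleib :=
    Algebra.adjoin_le (Set.range_subset_iff.2 hgen_nil)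
  rw [hgen] at hle
  exact hle Algebra.mem_top

end LocallyNilpotent

section Integration

variable {K : Type*} [Field K] {B : Type*} [Ring B] [Algebra K B] (δ : B →ₗ[K] B)
  (x : B)

def integralApprox (m : ℕ) : B →ₗ[K] B :=
  ∑ j ∈ Finset.range m,
    ((-1) ^ j / (j + 1).factorial : K) • (LinearMap.mulLeft K (x ^ (j + 1)) * δ ^ j)

theorem integralApprox_apply (m : ℕ) (b : B) :
    integralApprox δ x m b =
      ∑ j ∈ Finset.range m, ((-1) ^ j / (j + 1).factorial : K) • (x ^ (j + 1) * (δ ^ j) b) := by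
  simp [integralApprox]

variable {δ x} in
theorem integralApprox_eq_of_le {m m' : ℕ} (h : m ≤ m') {b : B} (hb : (δ ^ m) b = 0) :
    integralApprox δ x m' b = integralApprox δ x m b := by
  rw [integralApprox_apply, integralApprox_apply, ← Finset.sum_range_add_sum_Ico _ h,
    add_eq_left]
  refine Finset.sum_eq_zero fun j hj => ?_
  rw [pow_apply_eq_zero_of_le (Finset.mem_Ico.mp hj).1 hb, mul_zero, smul_zero]

variable {δ x} in
theorem integralApprox_congr {m m' : ℕ} {b : B} (hb : (δ ^ m) b = 0) (hb' : (δ ^ m') b = 0) :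
    integralApprox δ x m b = integralApprox δ x m' b := by
  rcases le_total m m' with h | h
  · exact (integralApprox_eq_of_le h hb).symm
  · exact integralApprox_eq_of_le h hb'

/-- An antiderivative for `δ` when `δ x = 1`: the sum defining `integralApprox` stabilises. -/
noncomputable def integral (hnil : ∀ b, ∃ m, (δ ^ m) b = 0) : B →ₗ[K] B where
  toFun b := integralApprox δ x (hnil b).choose b
  map_add' b c := by
    obtain ⟨m, hb, hc⟩ : ∃ m, (δ ^ m) b = 0 ∧ (δ ^ m) c = 0 :=
      ⟨_, pow_apply_eq_zero_of_le (le_max_left _ _) (hnil b).choose_spec,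
        pow_apply_eq_zero_of_le (le_max_right _ _) (hnil c).choose_spec⟩
    have hbc : (δ ^ m) (b + c) = 0 := by rw [map_add, hb, hc, add_zero]
    rw [integralApprox_congr (hnil _).choose_spec hbc, integralApprox_congr (hnil b).choose_spec hb,
      integralApprox_congr (hnil c).choose_spec hc, map_add]
  map_smul' r b := by
    have hb := (hnil b).choose_spec
    rw [integralApprox_congr (hnil _).choose_spec (by rw [map_smul, hb, smul_zero] :
      (δ ^ (hnil b).choose) (r • b) = 0), map_smul, RingHom.id_apply]

variable {δ x}

theorem integral_eq_integralApprox {hnil : ∀ b, ∃ m, (δ ^ m) b = 0} {m : ℕ} {b : B}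
    (hb : (δ ^ m) b = 0) : integral δ x hnil b = integralApprox δ x m b :=
  integralApprox_congr (hnil b).choose_spec hb

theorem map_pow_succ_of_leibniz (hleib : ∀ y z, δ (y * z) = δ y * z + y * δ z) (hx : δ x = 1)
    (j : ℕ) : δ (x ^ (j + 1)) = ((j : K) + 1) • x ^ j := by
  induction j with
  | zero => simp [hx]
  | succ j ih =>
    rw [pow_succ', hleib, ih, hx, one_mul, mul_smul_comm, ← pow_succ']
    push_cast
    module

theorem map_pow_eq_zero_of_leibniz {ε : B →ₗ[K] B} (hleib : ∀ y z, ε (y * z) = ε y * z + y * ε z)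
    (hx : ε x = 0) (j : ℕ) : ε (x ^ j) = 0 := by
  induction j with
  | zero => rw [pow_zero, map_one_eq_zero_of_leibniz hleib]
  | succ j ih => rw [pow_succ', hleib, ih, hx, zero_mul, mul_zero, add_zero]

theorem apply_integral [CharZero K] (hleib : ∀ y z, δ (y * z) = δ y * z + y * δ z)
    (hx : δ x = 1) (hnil : ∀ b, ∃ m, (δ ^ m) b = 0) (b : B) : δ (integral δ x hnil b) = b := by
  obtain ⟨m, hm⟩ := hnil b
  set g : ℕ → B := fun j => ((-1) ^ j / j.factorial : K) • (x ^ j * (δ ^ j) b)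
  have hterm (j : ℕ) : δ (((-1) ^ j / (j + 1).factorial : K) • (x ^ (j + 1) * (δ ^ j) b)) =
      g j - g (j + 1) := by
    rw [map_smul, hleib, map_pow_succ_of_leibniz hleib hx, ← Module.End.mul_apply, ← pow_succ']
    simp only [g, Nat.factorial_succ, smul_mul_assoc]
    match_scalars
    · field_simp
    · field_simp
      ring
  rw [integral_eq_integralApprox hm, integralApprox_apply, map_sum, Finset.sum_congr rfl
    fun j _ => hterm j, Finset.sum_range_sub']
  simp [g, hm]

theorem apply_integral_of_commute {ε : B →ₗ[K] B} (hleib : ∀ y z, ε (y * z) = ε y * z + y * ε z)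
    (hx : ε x = 0) (hcomm : Commute ε δ) (hnil : ∀ b, ∃ m, (δ ^ m) b = 0) (b : B) :
    ε (integral δ x hnil b) = integral δ x hnil (ε b) := by
  obtain ⟨m, hm⟩ := hnil b
  have hεm : (δ ^ m) (ε b) = 0 := by
    rw [← Module.End.mul_apply, ← (hcomm.pow_right m).eq, Module.End.mul_apply, hm, map_zero]
  rw [integral_eq_integralApprox hm, integral_eq_integralApprox hεm, integralApprox_apply,
    integralApprox_apply, map_sum]
  refine Finset.sum_congr rfl fun j _ => ?_
  rw [map_smul, hleib, map_pow_eq_zero_of_leibniz hleib hx, zero_mul, zero_add,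
    ← Module.End.mul_apply ε, (hcomm.pow_right j).eq, Module.End.mul_apply]

end Integration

theorem exists_antiderivatives {K : Type*} [Field K] [CharZero K] {B : Type*} [Ring B]
    [Algebra K B] {k : ℕ} {δ : Fin k → B →ₗ[K] B}
    (hleib : ∀ s y z, δ s (y * z) = δ s y * z + y * δ s z) (hδ : ∀ s t, Commute (δ s) (δ t))
    (hnil : ∀ s b, ∃ m, (δ s ^ m) b = 0) {x : Fin k → B}
    (hx : ∀ s t, δ s (x t) = if s = t then 1 else 0) :
    ∃ J : Fin k → Module.End K B, (∀ s, δ s * J s = 1) ∧ ∀ s t, s ≠ t → Commute (δ s) (J t) :=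
  ⟨fun s => integral (δ s) (x s) (hnil s),
    fun s => LinearMap.ext (apply_integral (hleib s) (by simp [hx]) (hnil s)),
    fun s t hst => LinearMap.ext
      (apply_integral_of_commute (hleib s) (by simp [hx, hst]) (hδ s t) (hnil t))⟩

section KoszulHomotopy

variable {A : Type*} [Ring A]

theorem List.prod_mul_eq_zero_of_commute_or {l : List A} {x : A}
    (h : ∀ a ∈ l, Commute a x ∨ a * x = 0) (hx : ∃ a ∈ l, a * x = 0) : l.prod * x = 0 := by
  induction l with
  | nil => simp at hx
  | cons a l ih =>
    rw [List.prod_cons, mul_assoc]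
    by_cases hl : ∃ b ∈ l, b * x = 0
    · rw [ih (fun b hb => h b (List.mem_cons_of_mem a hb)) hl, mul_zero]
    · push Not at hl
      have hcomm : Commute l.prod x := Commute.list_prod_left _ _ fun b hb =>
        (h b (List.mem_cons_of_mem a hb)).resolve_right (hl b hb)
      have ha : a * x = 0 := by
        obtain ⟨b, hb, hbx⟩ := hx
        rcases List.mem_cons.1 hb with rfl | hb
        · exact hbx
        · exact absurd hbx (hl b hb)
      rw [hcomm.eq, ← mul_assoc, ha, zero_mul]

theorem List.mul_prod_eq_zero_of_commute_or {l : List A} {x : A}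
    (h : ∀ a ∈ l, Commute x a ∨ x * a = 0) (hx : ∃ a ∈ l, x * a = 0) : x * l.prod = 0 := by
  induction l with
  | nil => simp at hx
  | cons a l ih =>
    rw [List.prod_cons, ← mul_assoc]
    by_cases ha : x * a = 0
    · rw [ha, zero_mul]
    · have hl : ∃ b ∈ l, x * b = 0 := by
        obtain ⟨b, hb, hbx⟩ := hx
        rcases List.mem_cons.1 hb with rfl | hb
        · exact absurd hbx ha
        · exact ⟨b, hb, hbx⟩
      rw [((h a List.mem_cons_self).resolve_right ha).eq, mul_assoc,
        ih (fun b hb => h b (List.mem_cons_of_mem a hb)) hl, mul_zero]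

theorem commute_mul_of_add_mul_eq_zero {a b c : A} (hb : a * b + b * a = 0)
    (hc : a * c + c * a = 0) : Commute a (b * c) :=
  calc a * (b * c) = (a * b + b * a) * c - b * (a * c + c * a) + b * c * a := by noncomm_ring
    _ = b * c * a := by rw [hb, hc]; noncomm_ring

theorem Finset.sum_mul_sum_self_eq_zero {ι : Type*} [Fintype ι] {D : ι → A}
    (hsq : ∀ s, D s * D s = 0) (hanti : ∀ s t, D s * D t + D t * D s = 0) :
    (∑ s, D s) * ∑ s, D s = 0 := by
  rw [Finset.sum_mul_sum, ← Finset.sum_product']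
  refine Finset.sum_ninvolution Prod.swap (fun p => hanti p.1 p.2) (fun p hp => ?_)
    (fun _ => Finset.mem_univ _) Prod.swap_swap
  · intro hswap
    have hdiag : p.1 = p.2 := congrArg Prod.snd hswap
    exact hp (by rw [hdiag, hsq])


structure KoszulRelations {k : ℕ} (D h π : Fin k → A) : Prop where
  diff_homotopy : ∀ s, D s * h s + h s * D s = 1 - π s
  diff_homotopy_of_ne : ∀ s t, s ≠ t → D s * h t + h t * D s = 0
  commute_diff_proj_of_ne : ∀ s t, s ≠ t → Commute (D s) (π t)
  diff_proj : ∀ s, D s * π s = 0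
  proj_diff : ∀ s, π s * D s = 0

theorem KoszulRelations.init {k : ℕ} {D h π : Fin (k + 1) → A} (H : KoszulRelations D h π) :
    KoszulRelations (Fin.init D) (Fin.init h) (Fin.init π) where
  diff_homotopy _ := H.diff_homotopy _
  diff_homotopy_of_ne _ _ hst := H.diff_homotopy_of_ne _ _ (Fin.castSucc_injective _ |>.ne hst)
  commute_diff_proj_of_ne _ _ hst :=
    H.commute_diff_proj_of_ne _ _ (Fin.castSucc_injective _ |>.ne hst)
  diff_proj _ := H.diff_proj _
  proj_diff _ := H.proj_diff _

/-- `koszulHomotopy k π h = ∑ t, π 0 * ⋯ * π (t - 1) * h t`. -/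
def koszulHomotopy : (k : ℕ) → (Fin k → A) → (Fin k → A) → A
  | 0, _, _ => 0
  | k + 1, π, h => koszulHomotopy k (Fin.init π) (Fin.init h) +
      (List.ofFn (Fin.init π)).prod * h (Fin.last k)

theorem mul_koszulHomotopy_add_eq_zero {k : ℕ} {π h : Fin k → A} {x : A}
    (hh : ∀ t, x * h t + h t * x = 0) (hπ : ∀ t, Commute x (π t)) :
    x * koszulHomotopy k π h + koszulHomotopy k π h * x = 0 := by
  induction k with
  | zero => simp [koszulHomotopy]
  | succ k ih =>
    set P := (List.ofFn (Fin.init π)).prod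
    set H' := koszulHomotopy k (Fin.init π) (Fin.init h)
    have hP : x * P - P * x = 0 := sub_eq_zero.2 <| (Commute.list_prod_right _ _ fun a ha => by
        obtain ⟨t, rfl⟩ := List.mem_ofFn.1 ha
        exact hπ _).eq
    calc x * (H' + P * h (Fin.last k)) + (H' + P * h (Fin.last k)) * x
        = (x * H' + H' * x) + (x * P - P * x) * h (Fin.last k) +
            P * (x * h (Fin.last k) + h (Fin.last k) * x) := by noncomm_ring
      _ = 0 := by
        rw [ih (π := Fin.init π) (h := Fin.init h) (fun t => hh _) (fun t => hπ _), hP, hh]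
        noncomm_ring

theorem KoszulRelations.sum_diff_mul_list_prod {k : ℕ} {D h π : Fin k → A}
    (H : KoszulRelations D h π) : (∑ s, D s) * (List.ofFn π).prod = 0 := by
  rw [Finset.sum_mul]
  refine Finset.sum_eq_zero fun s _ => List.mul_prod_eq_zero_of_commute_or ?_ ?_
  · intro a ha
    obtain ⟨t, rfl⟩ := List.mem_ofFn.1 ha
    by_cases hst : s = t
    · exact .inr (hst ▸ H.diff_proj s)
    · exact .inl (H.commute_diff_proj_of_ne s t hst)
  · exact ⟨π s, List.mem_ofFn.2 ⟨s, rfl⟩, H.diff_proj s⟩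

theorem KoszulRelations.list_prod_mul_sum_diff {k : ℕ} {D h π : Fin k → A}
    (H : KoszulRelations D h π) : (List.ofFn π).prod * ∑ s, D s = 0 := by
  rw [Finset.mul_sum]
  refine Finset.sum_eq_zero fun s _ => List.prod_mul_eq_zero_of_commute_or ?_ ?_
  · intro a ha
    obtain ⟨t, rfl⟩ := List.mem_ofFn.1 ha
    by_cases hst : t = s
    · exact .inr (hst ▸ H.proj_diff t)
    · exact .inl (H.commute_diff_proj_of_ne s t (Ne.symm hst)).symm
  · exact ⟨π s, List.mem_ofFn.2 ⟨s, rfl⟩, H.proj_diff s⟩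

theorem KoszulRelations.koszulHomotopy_spec {k : ℕ} {D h π : Fin k → A}
    (H : KoszulRelations D h π) :
    (∑ s, D s) * koszulHomotopy k π h + koszulHomotopy k π h * ∑ s, D s =
      1 - (List.ofFn π).prod := by
  induction k with
  | zero => simp [koszulHomotopy]
  | succ k ih =>
    set a := ∑ s, Fin.init D s
    set P := (List.ofFn (Fin.init π)).prod
    set H' := koszulHomotopy k (Fin.init π) (Fin.init h)
    have hIH : a * H' + H' * a = 1 - P := ih H.init
    have haP : a * P = 0 := H.init.sum_diff_mul_list_prod
    have hPa : P * a = 0 := H.init.list_prod_mul_sum_diff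
    have hbH : D (Fin.last k) * H' + H' * D (Fin.last k) = 0 :=
      mul_koszulHomotopy_add_eq_zero
        (fun t => H.diff_homotopy_of_ne _ _ (Fin.castSucc_ne_last t).symm)
        (fun t => H.commute_diff_proj_of_ne _ _ (Fin.castSucc_ne_last t).symm)
    have hbP : D (Fin.last k) * P - P * D (Fin.last k) = 0 :=
      sub_eq_zero.2 (Commute.list_prod_right _ _ fun x hx => by
        obtain ⟨t, rfl⟩ := List.mem_ofFn.1 hx
        exact H.commute_diff_proj_of_ne _ _ (Fin.castSucc_ne_last t).symm).eq
    have hha : a * h (Fin.last k) + h (Fin.last k) * a = 0 := by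
      simp only [a, Finset.mul_sum, Finset.sum_mul, ← Finset.sum_add_distrib]
      exact Finset.sum_eq_zero fun t _ => H.diff_homotopy_of_ne _ _ (Fin.castSucc_ne_last t)
    rw [Fin.sum_univ_castSucc, List.ofFn_succ', List.prod_concat]
    change (a + _) * (H' + P * _) + (H' + P * _) * (a + _) = 1 - P * _
    calc (a + D (Fin.last k)) * (H' + P * h (Fin.last k)) +
          (H' + P * h (Fin.last k)) * (a + D (Fin.last k))
        = (a * H' + H' * a) + (D (Fin.last k) * H' + H' * D (Fin.last k)) +
            a * P * h (Fin.last k) + P * (a * h (Fin.last k) + h (Fin.last k) * a) -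
            P * a * h (Fin.last k) + (D (Fin.last k) * P - P * D (Fin.last k)) * h (Fin.last k) +
            P * (D (Fin.last k) * h (Fin.last k) + h (Fin.last k) * D (Fin.last k)) := by
          noncomm_ring
      _ = 1 - P * π (Fin.last k) := by
          rw [hIH, hbH, haP, hha, hPa, hbP, H.diff_homotopy]
          noncomm_ring

theorem koszulHomotopy_apply_mem {R X : Type*} [Semiring R] [AddCommGroup X] [Module R X]
    {k : ℕ} {π h : Fin k → Module.End R X} {S S' : Submodule R X}
    (hπ : ∀ t, ∀ y ∈ S', π t y ∈ S') (hh : ∀ t, ∀ y ∈ S, h t y ∈ S') {y : X} (hy : y ∈ S) :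
    koszulHomotopy k π h y ∈ S' := by
  induction k with
  | zero => exact S'.zero_mem
  | succ k ih =>
    have hP : ∀ z ∈ S', (List.ofFn (Fin.init π)).prod z ∈ S' :=
      List.prod_induction (fun f : Module.End R X => ∀ z ∈ S', f z ∈ S')
        (fun f g hf hg z hz => hf _ (hg z hz)) (fun z hz => hz) fun f hf => by
          obtain ⟨t, rfl⟩ := List.mem_ofFn.1 hf
          exact hπ _
    exact add_mem (ih (fun t => hπ _) (fun t => hh _)) (hP _ (hh _ y hy))

end KoszulHomotopy

namespace TensorProduct

variable {R : Type*} [CommRing R] {M N P Q : Type*} [AddCommGroup M] [Module R M]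
  [AddCommGroup N] [Module R N] [AddCommGroup P] [Module R P] [AddCommGroup Q] [Module R Q]

theorem map_sub_left (f₁ f₂ : M →ₗ[R] P) (g : N →ₗ[R] Q) :
    map (f₁ - f₂) g = map f₁ g - map f₂ g :=
  (mapBilinear (RingHom.id R) M N P Q).map_sub₂ f₁ f₂ g

theorem map_sub_right (f : M →ₗ[R] P) (g₁ g₂ : N →ₗ[R] Q) :
    map f (g₁ - g₂) = map f g₁ - map f g₂ :=
  (mapBilinear (RingHom.id R) M N P Q f).map_sub g₁ g₂

theorem list_prod_ofFn_map {k : ℕ} (f : Fin k → Module.End R M) (g : Fin k → Module.End R N) :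
    (List.ofFn fun s => map (f s) (g s)).prod = map (List.ofFn f).prod (List.ofFn g).prod := by
  induction k with
  | zero => exact TensorProduct.map_one.symm
  | succ k ih => simp only [List.ofFn_succ, List.prod_cons, ih, TensorProduct.map_mul]

theorem map_mem_range_lTensor_subtype {f : Module.End R M} {g : Module.End R N}
    {S S' : Submodule R N} (hg : ∀ y ∈ S, g y ∈ S') {x : M ⊗[R] N}
    (hx : x ∈ LinearMap.range (S.subtype.lTensor M)) :
    map f g x ∈ LinearMap.range (S'.subtype.lTensor M) := by
  obtain ⟨z, rfl⟩ := hx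
  refine ⟨map f (g.restrict hg) z, ?_⟩
  rw [← LinearMap.comp_apply, ← LinearMap.comp_apply, LinearMap.lTensor, LinearMap.lTensor,
    ← map_comp, ← map_comp]
  rfl

end TensorProduct

section ExteriorAlgebra

open ExteriorAlgebra

variable {R : Type*} [CommRing R] {V : Type*} [AddCommGroup V] [Module R V]
  {M : Type*} [AddCommGroup M] [Module R M]

theorem ExteriorAlgebra.ι_mul_mem_exteriorPower (v : V) {i : ℕ} {y : ExteriorAlgebra R V}
    (hy : y ∈ ⋀[R]^i V) : ι R v * y ∈ ⋀[R]^(i + 1) V := by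
  rw [exteriorPower, pow_succ']
  exact Submodule.mul_mem_mul (LinearMap.mem_range_self _ v) hy

theorem ExteriorAlgebra.mulLeft_ι_mul_self (v : V) :
    LinearMap.mulLeft R (ι R v) * LinearMap.mulLeft R (ι R v) = 0 := by
  ext y
  simp [← mul_assoc]

theorem ExteriorAlgebra.mulLeft_ι_mul_add (v w : V) :
    LinearMap.mulLeft R (ι R v) * LinearMap.mulLeft R (ι R w) +
      LinearMap.mulLeft R (ι R w) * LinearMap.mulLeft R (ι R v) = 0 := by
  ext y
  simp [← mul_assoc, ← add_mul, ι_add_mul_swap]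

theorem ExteriorAlgebra.contractLeft_mul_mulLeft_ι (d : Module.Dual R V) (v : V) :
    CliffordAlgebra.contractLeft (Q := 0) d * LinearMap.mulLeft R (ι R v) +
      LinearMap.mulLeft R (ι R v) * CliffordAlgebra.contractLeft (Q := 0) d = d v • 1 := by
  ext y
  simp [CliffordAlgebra.contractLeft_ι_mul]

theorem ExteriorAlgebra.contractLeft_mem_exteriorPower (d : Module.Dual R V) {i : ℕ}
    {y : ExteriorAlgebra R V} (hy : y ∈ ⋀[R]^(i + 1) V) :
    CliffordAlgebra.contractLeft (Q := 0) d y ∈ ⋀[R]^i V := by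
  induction i generalizing y with
  | zero =>
    rw [zero_add, exteriorPower, pow_one] at hy
    obtain ⟨v, rfl⟩ := hy
    rw [← mul_one (ι R v), CliffordAlgebra.contractLeft_ι_mul, CliffordAlgebra.contractLeft_one,
      mul_zero, sub_zero]
    exact Submodule.smul_mem _ _ (by simp [exteriorPower])
  | succ i ih =>
    rw [exteriorPower, pow_succ'] at hy
    refine Submodule.mul_induction_on hy ?_ fun a b ha hb => by rw [map_add]; exact add_mem ha hb
    rintro _ ⟨v, rfl⟩ z hz
    rw [CliffordAlgebra.contractLeft_ι_mul]
    exact sub_mem (Submodule.smul_mem _ _ hz) (ι_mul_mem_exteriorPower v (ih hz))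

theorem ExteriorAlgebra.lTensor_exteriorPower_subtype_injective (i : ℕ) :
    Function.Injective ((⋀[R]^i V).subtype.lTensor M) := by
  let r : ExteriorAlgebra R V →ₗ[R] ⋀[R]^i V :=
    DirectSum.component R ℕ (fun j => ⋀[R]^j V) i ∘ₗ
      (DirectSum.decomposeLinearEquiv (fun j : ℕ => ⋀[R]^j V)).toLinearMap
  have hr : r ∘ₗ (⋀[R]^i V).subtype = LinearMap.id := by
    refine LinearMap.ext fun y => ?_
    simp [r, DirectSum.decomposeLinearEquiv_apply, DirectSum.decompose_coe,
      ← DirectSum.lof_eq_of R]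
  refine Function.LeftInverse.injective (g := r.lTensor M) fun x => ?_
  rw [← LinearMap.comp_apply, ← LinearMap.lTensor_comp, hr, LinearMap.lTensor_id,
    LinearMap.id_apply]

theorem exteriorPower.coe_zeroEquiv_symm_one :
    ((exteriorPower.zeroEquiv R V).symm 1 : ExteriorAlgebra R V) = 1 := by
  simp [exteriorPower.zeroEquiv_symm_apply]

theorem exteriorPower.exists_eq_tmul_zeroEquiv_symm_one (x : M ⊗[R] ⋀[R]^0 V) :
    ∃ m : M, x = m ⊗ₜ (exteriorPower.zeroEquiv R V).symm 1 := by
  let e := (LinearEquiv.lTensor M (exteriorPower.zeroEquiv R V)).trans (TensorProduct.rid R M)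
  have he (m : M) : e.symm m = m ⊗ₜ (exteriorPower.zeroEquiv R V).symm 1 := by simp [e]
  exact ⟨e x, by rw [← he, e.symm_apply_apply]⟩

end ExteriorAlgebra

section KoszulComplex

open TensorProduct ExteriorAlgebra

variable {R : Type*} [CommRing R] {M : Type*} [AddCommGroup M] [Module R M] {k : ℕ}

variable (R) in
noncomputable def wedgeSingle (s : Fin k) : Module.End R (ExteriorAlgebra R (Fin k → R)) :=
  LinearMap.mulLeft R (ι R (Pi.single s 1))

variable (R) in
noncomputable def contractCoord (t : Fin k) : Module.End R (ExteriorAlgebra R (Fin k → R)) :=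
  CliffordAlgebra.contractLeft (LinearMap.proj t)

theorem contractCoord_mul_wedgeSingle_add (s t : Fin k) :
    contractCoord R t * wedgeSingle R s + wedgeSingle R s * contractCoord R t =
      if s = t then 1 else 0 := by
  rw [contractCoord, wedgeSingle, contractLeft_mul_mulLeft_ι, LinearMap.proj_apply,
    Pi.single_apply]
  split_ifs <;> simp_all [eq_comm]

theorem wedgeSingle_mul_contractCoord_add_of_ne {s t : Fin k} (hst : s ≠ t) :
    wedgeSingle R s * contractCoord R t + contractCoord R t * wedgeSingle R s = 0 := by
  rw [add_comm, contractCoord_mul_wedgeSingle_add, if_neg hst]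

theorem list_prod_contractCoord_mul_wedgeSingle_apply {i : ℕ} {y : ExteriorAlgebra R (Fin k → R)}
    (hy : y ∈ ⋀[R]^(i + 1) (Fin k → R)) :
    (List.ofFn fun t => contractCoord R t * wedgeSingle R t).prod y = 0 := by
  have hkill (s : Fin k) :
      (List.ofFn fun t => contractCoord R t * wedgeSingle R t).prod * wedgeSingle R s = 0 := by
    refine List.prod_mul_eq_zero_of_commute_or (fun a ha => ?_)
      ⟨_, List.mem_ofFn.2 ⟨s, rfl⟩, by rw [mul_assoc, wedgeSingle, mulLeft_ι_mul_self, mul_zero]⟩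
    obtain ⟨t, rfl⟩ := List.mem_ofFn.1 ha
    by_cases hst : s = t
    · subst hst
      exact .inr (by rw [mul_assoc, wedgeSingle, mulLeft_ι_mul_self, mul_zero])
    · exact .inl (commute_mul_of_add_mul_eq_zero (wedgeSingle_mul_contractCoord_add_of_ne hst)
        (mulLeft_ι_mul_add _ _)).symm
  rw [exteriorPower, pow_succ'] at hy
  refine Submodule.mul_induction_on hy ?_ fun a b ha hb => by rw [map_add, ha, hb, add_zero]
  rintro _ ⟨v, rfl⟩ z -
  rw [pi_eq_sum_univ' v, map_sum, Finset.sum_mul, map_sum]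
  refine Finset.sum_eq_zero fun s _ => ?_
  rw [map_smul, smul_mul_assoc, map_smul]
  rw [← LinearMap.mulLeft_apply (R := R), ← wedgeSingle, ← Module.End.mul_apply, hkill,
    LinearMap.zero_apply, smul_zero]

theorem wedgeSingle_mem {s : Fin k} {i : ℕ} {y : ExteriorAlgebra R (Fin k → R)}
    (hy : y ∈ ⋀[R]^i (Fin k → R)) : wedgeSingle R s y ∈ ⋀[R]^(i + 1) (Fin k → R) :=
  ι_mul_mem_exteriorPower _ hy

theorem contractCoord_mem {t : Fin k} {i : ℕ} {y : ExteriorAlgebra R (Fin k → R)}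
    (hy : y ∈ ⋀[R]^(i + 1) (Fin k → R)) : contractCoord R t y ∈ ⋀[R]^i (Fin k → R) :=
  contractLeft_mem_exteriorPower _ hy

variable (δ J : Fin k → Module.End R M)

noncomputable def koszulDiffTerm (s : Fin k) :
    Module.End R (M ⊗[R] ExteriorAlgebra R (Fin k → R)) :=
  map (δ s) (wedgeSingle R s)

noncomputable def koszulDiff : Module.End R (M ⊗[R] ExteriorAlgebra R (Fin k → R)) :=
  ∑ s, koszulDiffTerm δ s

theorem koszulDiff_tmul (m : M) (y : ExteriorAlgebra R (Fin k → R)) :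
    koszulDiff δ (m ⊗ₜ y) = ∑ s, δ s m ⊗ₜ wedgeSingle R s y := by
  simp [koszulDiff, koszulDiffTerm]

theorem koszulDiff_mul_self (hδ : ∀ s t, Commute (δ s) (δ t)) :
    koszulDiff δ * koszulDiff δ = 0 :=
  Finset.sum_mul_sum_self_eq_zero
    (fun s => by
      rw [koszulDiffTerm, ← TensorProduct.map_mul, wedgeSingle, mulLeft_ι_mul_self,
        map_zero_right])
    (fun s t => by
      rw [koszulDiffTerm, koszulDiffTerm, ← TensorProduct.map_mul, ← TensorProduct.map_mul,
        (hδ s t).eq, ← map_add_right, wedgeSingle, wedgeSingle, mulLeft_ι_mul_add,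
        map_zero_right])

theorem koszulRelations (hδ : ∀ s t, Commute (δ s) (δ t)) (hJ : ∀ s, δ s * J s = 1)
    (hδJ : ∀ s t, s ≠ t → Commute (δ s) (J t)) :
    KoszulRelations (koszulDiffTerm δ) (fun t => map (J t) (contractCoord R t))
      (fun t => map (1 - J t * δ t) (contractCoord R t * wedgeSingle R t)) where
  diff_homotopy s := by
    have hwc : wedgeSingle R s * contractCoord R s = 1 - contractCoord R s * wedgeSingle R s :=
      eq_sub_of_add_eq' (by rw [contractCoord_mul_wedgeSingle_add, if_pos rfl])
    simp only [koszulDiffTerm, ← TensorProduct.map_mul, hJ, hwc, map_sub_left, map_sub_right,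
      TensorProduct.map_one]
    abel
  diff_homotopy_of_ne s t hst := by
    rw [koszulDiffTerm, ← TensorProduct.map_mul, ← TensorProduct.map_mul, (hδJ s t hst).eq,
      ← map_add_right, wedgeSingle_mul_contractCoord_add_of_ne hst, map_zero_right]
  commute_diff_proj_of_ne s t hst := by
    have hδN : Commute (δ s) (1 - J t * δ t) :=
      (Commute.one_right _).sub_right ((hδJ s t hst).mul_right (hδ s t))
    have hwq : Commute (wedgeSingle R s) (contractCoord R t * wedgeSingle R t) :=
      commute_mul_of_add_mul_eq_zero (wedgeSingle_mul_contractCoord_add_of_ne hst)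
        (mulLeft_ι_mul_add _ _)
    rw [koszulDiffTerm, Commute, SemiconjBy, ← TensorProduct.map_mul, ← TensorProduct.map_mul,
      hδN.eq, hwq.eq]
  diff_proj s := by
    rw [koszulDiffTerm, ← TensorProduct.map_mul, mul_sub, mul_one, ← mul_assoc, hJ, one_mul,
      sub_self, map_zero_left]
  proj_diff s := by
    rw [koszulDiffTerm, ← TensorProduct.map_mul, mul_assoc, wedgeSingle, mulLeft_ι_mul_self,
      mul_zero, map_zero_right]

end KoszulComplex

section Exactness

open TensorProduct ExteriorAlgebra

variable {R : Type*} [CommRing R] {M : Type*} [AddCommGroup M] [Module R M] {k : ℕ}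

variable (R M k) in
def koszulChains (i : ℕ) : Submodule R (M ⊗[R] ExteriorAlgebra R (Fin k → R)) :=
  LinearMap.range ((⋀[R]^i (Fin k → R)).subtype.lTensor M)

theorem exists_koszulDiff_eq {δ J : Fin k → Module.End R M} (hδ : ∀ s t, Commute (δ s) (δ t))
    (hJ : ∀ s, δ s * J s = 1) (hδJ : ∀ s t, s ≠ t → Commute (δ s) (J t)) {i : ℕ}
    {x : M ⊗[R] ExteriorAlgebra R (Fin k → R)} (hx : x ∈ koszulChains R M k (i + 1))
    (hDx : koszulDiff δ x = 0) : ∃ y ∈ koszulChains R M k i, koszulDiff δ y = x := by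
  have hspec := LinearMap.congr_fun (koszulRelations δ J hδ hJ hδJ).koszulHomotopy_spec x
  have hproj : (List.ofFn fun t =>
      map (1 - J t * δ t) (contractCoord R t * wedgeSingle R t)).prod x = 0 := by
    obtain ⟨z, rfl⟩ := hx
    rw [list_prod_ofFn_map, ← LinearMap.comp_apply, LinearMap.lTensor, ← map_comp]
    have : (List.ofFn fun t => contractCoord R t * wedgeSingle R t).prod ∘ₗ
        (⋀[R]^(i + 1) (Fin k → R)).subtype = 0 :=
      LinearMap.ext fun y => list_prod_contractCoord_mul_wedgeSingle_apply y.2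
    rw [this, map_zero_right, LinearMap.zero_apply]
  refine ⟨koszulHomotopy k (fun t => map (1 - J t * δ t) (contractCoord R t * wedgeSingle R t))
    (fun t => map (J t) (contractCoord R t)) x,
    koszulHomotopy_apply_mem (fun t y hy => ?_) (fun t y hy => ?_) hx, ?_⟩
  · exact map_mem_range_lTensor_subtype (fun w hw => contractCoord_mem (wedgeSingle_mem hw)) hy
  · exact map_mem_range_lTensor_subtype (fun w hw => contractCoord_mem hw) hy
  · change (koszulDiff δ * _ + _ * koszulDiff δ) x = _ at hspec
    rwa [LinearMap.add_apply, Module.End.mul_apply, Module.End.mul_apply, hDx, map_zero, add_zero,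
      LinearMap.sub_apply, hproj, Module.End.one_apply, sub_zero] at hspec

end Exactness

section Intertwining

open TensorProduct ExteriorAlgebra

variable {R : Type*} [CommRing R] {M : Type*} [AddCommGroup M] [Module R M] {k : ℕ}
  {δ : Fin k → Module.End R M}
  {d : ∀ i : ℕ, (M ⊗[R] ⋀[R]^i (Fin k → R)) →ₗ[R] (M ⊗[R] ⋀[R]^(i + 1) (Fin k → R))}

theorem apply_eq_zero_of_koszulDiff_tmul_one {m : M}
    (hm : koszulDiff δ (m ⊗ₜ 1) = 0) (t : Fin k) : δ t m = 0 := by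
  have hcoeff : (TensorProduct.rid R M ∘ₗ
      ((algebraMapInv (R := R)).toLinearMap ∘ₗ contractCoord R t).lTensor M)
      (koszulDiff δ (m ⊗ₜ 1)) = δ t m := by
    simp [koszulDiff_tmul, wedgeSingle, contractCoord, CliffordAlgebra.contractLeft_ι,
      Pi.single_apply]
  rw [← hcoeff, hm, map_zero]

theorem comp_eq_zero_of_intertwines (hδ : ∀ s t, Commute (δ s) (δ t))
    (hd : ∀ i, (⋀[R]^(i + 1) (Fin k → R)).subtype.lTensor M ∘ₗ d i =
      koszulDiff δ ∘ₗ (⋀[R]^i (Fin k → R)).subtype.lTensor M) (i : ℕ) :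
    (d (i + 1)).comp (d i) = 0 := by
  refine LinearMap.ext fun z => lTensor_exteriorPower_subtype_injective (i + 2) ?_
  rw [LinearMap.comp_apply, ← LinearMap.comp_apply _ (d (i + 1)), hd, LinearMap.comp_apply,
    ← LinearMap.comp_apply _ (d i), hd, LinearMap.comp_apply, ← Module.End.mul_apply,
    koszulDiff_mul_self δ hδ, LinearMap.zero_apply, LinearMap.zero_apply, map_zero]

theorem ker_succ_eq_range_of_intertwines {J : Fin k → Module.End R M}
    (hδ : ∀ s t, Commute (δ s) (δ t)) (hJ : ∀ s, δ s * J s = 1)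
    (hδJ : ∀ s t, s ≠ t → Commute (δ s) (J t))
    (hd : ∀ i, (⋀[R]^(i + 1) (Fin k → R)).subtype.lTensor M ∘ₗ d i =
      koszulDiff δ ∘ₗ (⋀[R]^i (Fin k → R)).subtype.lTensor M) (i : ℕ) :
    LinearMap.ker (d (i + 1)) = LinearMap.range (d i) := by
  refine le_antisymm (fun x hx => ?_)
    (LinearMap.range_le_ker_iff.2 (comp_eq_zero_of_intertwines hδ hd i))
  obtain ⟨_, ⟨z, rfl⟩, hz⟩ := exists_koszulDiff_eq hδ hJ hδJ ⟨x, rfl⟩ (by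
    rw [← LinearMap.comp_apply (koszulDiff δ), ← hd, LinearMap.comp_apply,
      LinearMap.mem_ker.1 hx, map_zero])
  refine ⟨z, lTensor_exteriorPower_subtype_injective _ ?_⟩
  rw [← LinearMap.comp_apply _ (d i), hd, LinearMap.comp_apply, hz]

theorem ker_zero_eq_range_of_intertwines
    (hd : ∀ i, (⋀[R]^(i + 1) (Fin k → R)).subtype.lTensor M ∘ₗ d i =
      koszulDiff δ ∘ₗ (⋀[R]^i (Fin k → R)).subtype.lTensor M) :
    LinearMap.ker (d 0) = LinearMap.range (map (⨅ s, LinearMap.ker (δ s)).subtype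
      (LinearMap.id : ⋀[R]^0 (Fin k → R) →ₗ[R] ⋀[R]^0 (Fin k → R))) := by
  have hd0 (x : M ⊗[R] ⋀[R]^0 (Fin k → R)) (m : M)
      (hx : x = m ⊗ₜ (exteriorPower.zeroEquiv R (Fin k → R)).symm 1) :
      (⋀[R]^1 (Fin k → R)).subtype.lTensor M (d 0 x) = koszulDiff δ (m ⊗ₜ 1) := by
    rw [← LinearMap.comp_apply, hd, LinearMap.comp_apply, hx, LinearMap.lTensor_tmul,
      Submodule.subtype_apply, exteriorPower.coe_zeroEquiv_symm_one]
  refine le_antisymm (fun x hx => ?_) (LinearMap.range_le_ker_iff.2 ?_)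
  · obtain ⟨m, rfl⟩ := exteriorPower.exists_eq_tmul_zeroEquiv_symm_one x
    have hm : koszulDiff δ (m ⊗ₜ 1) = 0 := by rw [← hd0 _ m rfl, LinearMap.mem_ker.1 hx, map_zero]
    have hmG : m ∈ ⨅ s, LinearMap.ker (δ s) :=
      Submodule.mem_iInf _ |>.2 fun s => apply_eq_zero_of_koszulDiff_tmul_one hm s
    exact ⟨⟨m, hmG⟩ ⊗ₜ _, rfl⟩
  · refine TensorProduct.ext' fun g ω => lTensor_exteriorPower_subtype_injective (0 + 1) ?_
    have hg : ∀ s, δ s g = 0 := Submodule.mem_iInf _ |>.1 g.2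
    rw [LinearMap.comp_apply, map_tmul, LinearMap.zero_apply, map_zero, ← LinearMap.comp_apply,
      hd, LinearMap.comp_apply, LinearMap.lTensor_tmul, koszulDiff_tmul]
    simp [hg]

end Intertwining

theorem lTensor_subtype_comp_eq_koszulDiff_comp {M : Type*} [AddCommGroup M] [Module ℂ M]
    {k : ℕ} (δ : Fin k → Module.End ℂ M)
    (d : ∀ i : ℕ, (M ⊗[ℂ] ⋀[ℂ]^i (Fin k → ℂ)) →ₗ[ℂ] (M ⊗[ℂ] ⋀[ℂ]^(i + 1) (Fin k → ℂ)))
    (hd : ∀ (i : ℕ) (m : M) (ω : ⋀[ℂ]^i (Fin k → ℂ)),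
      d i (m ⊗ₜ[ℂ] ω) = ∑ s : Fin k, (δ s m) ⊗ₜ[ℂ] wedgeCons i (Pi.single s 1) ω) (i : ℕ) :
    (⋀[ℂ]^(i + 1) (Fin k → ℂ)).subtype.lTensor M ∘ₗ d i =
      koszulDiff δ ∘ₗ (⋀[ℂ]^i (Fin k → ℂ)).subtype.lTensor M := by
  refine TensorProduct.ext' fun m ω => ?_
  simp [hd, koszulDiff_tmul, wedgeSingle, wedgeCons]

theorem statement4_general
    (B : Type) [Ring B] [Algebra ℂ B]
    (n k : ℕ) (hk : k ≤ n)
    (Bgen : Fin n → B)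
    (hgen : Algebra.adjoin ℂ (Set.range Bgen) = ⊤)
    (der : Fin k → (B →ₗ[ℂ] B))
    (hleib : ∀ (s : Fin k) (x y : B), der s (x * y) = der s x * y + x * der s y)
    (hcomm : ∀ (s t : Fin k) (x : B), der s (der t x) = der t (der s x))
    (hval : ∀ (s : Fin k) (j : Fin n),
      der s (Bgen j) = if (s : ℕ) = (j : ℕ) then 1 else 0)
    (G : ℕ → Submodule ℂ B)
    (hG0 : G 0 = ⨅ s, LinearMap.ker (der s))
    (d : ∀ i : ℕ,
      (B ⊗[ℂ] ⋀[ℂ]^i (Fin k → ℂ)) →ₗ[ℂ] (B ⊗[ℂ] ⋀[ℂ]^(i + 1) (Fin k → ℂ)))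
    (hd : ∀ (i : ℕ) (b : B) (ω : ⋀[ℂ]^i (Fin k → ℂ)),
      d i (b ⊗ₜ[ℂ] ω) = ∑ s : Fin k, (der s b) ⊗ₜ[ℂ] wedgeCons i (Pi.single s 1) ω) :
    (∀ i : ℕ, (d (i + 1)).comp (d i) = 0) ∧
    (LinearMap.ker (d 0) =
      LinearMap.range
        (TensorProduct.map (G 0).subtype
          (LinearMap.id : ⋀[ℂ]^0 (Fin k → ℂ) →ₗ[ℂ] ⋀[ℂ]^0 (Fin k → ℂ)))) ∧
    (∀ i : ℕ, LinearMap.ker (d (i + 1)) = LinearMap.range (d i)) := by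
  have hδ (s t : Fin k) : Commute (der s) (der t) := LinearMap.ext (hcomm s t)
  have hnil (s : Fin k) : ∀ b, ∃ m, (der s ^ m) b = 0 :=
    exists_pow_apply_eq_zero_of_adjoin_eq_top hgen (hleib s) fun j => ⟨2, by
      rw [sq, Module.End.mul_apply, hval]
      split_ifs
      exacts [map_one_eq_zero_of_leibniz (hleib s), map_zero _]⟩
  obtain ⟨J, hJ, hδJ⟩ := exists_antiderivatives hleib hδ hnil
    (x := fun s => Bgen (Fin.castLE hk s)) fun s t => by simp [hval, Fin.ext_iff]
  have hcompat := lTensor_subtype_comp_eq_koszulDiff_comp der d hd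
  refine ⟨comp_eq_zero_of_intertwines hδ hcompat, ?_,
    ker_succ_eq_range_of_intertwines hδ hJ hδJ hcompat⟩
  rw [hG0]
  exact ker_zero_eq_range_of_intertwines hcompat

/-- the Koszul-type complex `B ⊗ Λ•(ℂᵏ)` with differential
`d(b ⊗ ω) = Σ_s ∂ s b ⊗ (e_s ∧ ω)` is a complex whose cohomology is concentrated in
degree `0`, where it equals `G⁰ ⊗ Λ⁰` (so it is isomorphic to `G⁰ = ⋂ ker ∂ s`). -/
theorem statement4
    (B : Type) [Ring B] [Algebra ℂ B]
    (n k : ℕ) (hk : k ≤ n)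
    (Bgen : Fin n → B)
    (hgen : Algebra.adjoin ℂ (Set.range Bgen) = ⊤)
    (der : Fin k → (B →ₗ[ℂ] B))
    (hleib : ∀ (s : Fin k) (x y : B), der s (x * y) = der s x * y + x * der s y)
    (hcomm : ∀ (s t : Fin k) (x : B), der s (der t x) = der t (der s x))
    (hval : ∀ (s : Fin k) (j : Fin n),
      der s (Bgen j) = if (s : ℕ) = (j : ℕ) then 1 else 0)
    (G : ℕ → Submodule ℂ B)
    (hG0 : G 0 = ⨅ s, LinearMap.ker (der s))
    (hGsucc : ∀ i, G (i + 1) = ⨅ s, (G i).comap (der s))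
    (d : ∀ i : ℕ,
      (B ⊗[ℂ] ⋀[ℂ]^i (Fin k → ℂ)) →ₗ[ℂ] (B ⊗[ℂ] ⋀[ℂ]^(i + 1) (Fin k → ℂ)))
    (hd : ∀ (i : ℕ) (b : B) (ω : ⋀[ℂ]^i (Fin k → ℂ)),
      d i (b ⊗ₜ[ℂ] ω) = ∑ s : Fin k, (der s b) ⊗ₜ[ℂ] wedgeCons i (Pi.single s 1) ω) :
    (∀ i : ℕ, (d (i + 1)).comp (d i) = 0) ∧
    (LinearMap.ker (d 0) =
      LinearMap.range
        (TensorProduct.map (G 0).subtype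
          (LinearMap.id : ⋀[ℂ]^0 (Fin k → ℂ) →ₗ[ℂ] ⋀[ℂ]^0 (Fin k → ℂ)))) ∧
    (∀ i : ℕ, LinearMap.ker (d (i + 1)) = LinearMap.range (d i)) :=
  statement4_general B n k hk Bgen hgen der hleib hcomm hval G hG0 d hd
end

section
/- Assume in addition that each matrix Γ^m is symmetric (Γ^m_{αβ} = Γ^m_{βα} for all α, β) and that Σ_{j=1}^{d'} (φ_j u_j − u_j φ_j) + Σ_{α=1}^{N} (ψ^α v_α + v_α ψ^α) = 0 in F. Then the Yang–Mills relation elements satisfy the Noether (gauge) identity: Σ_{m=1}^{D} (A_m r_m − r_m A_m) + Σ_{j=1}^{d'} (φ_j r'_j − r'_j φ_j) + Σ_{α=1}^{N} (ψ^α r''_α + r''_α ψ^α) = 0 in the free algebra F. -/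
open scoped BigOperators

noncomputable section

/-- Generators of the free algebra: `A_1, …, A_D`, `φ_1, …, φ_{d'}`, `ψ^1, …, ψ^N`. -/
abbrev YMVar (D d' N : ℕ) := Fin D ⊕ (Fin d' ⊕ Fin N)

/-- The free unital associative ℂ-algebra on the Yang–Mills generators. -/
abbrev YMFree (D d' N : ℕ) := FreeAlgebra ℂ (YMVar D d' N)

variable {D d' N : ℕ}

/-- The generator `A_i`. -/
def ymA (i : Fin D) : YMFree D d' N := FreeAlgebra.ι ℂ (Sum.inl i)

/-- The generator `φ_j`. -/
def ymPhi (j : Fin d') : YMFree D d' N := FreeAlgebra.ι ℂ (Sum.inr (Sum.inl j))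

/-- The generator `ψ^α`. -/
def ymPsi (α : Fin N) : YMFree D d' N := FreeAlgebra.ι ℂ (Sum.inr (Sum.inr α))

/-- Commutator `[a,b] = ab - ba`. -/
def ymBr (a b : YMFree D d' N) : YMFree D d' N := a * b - b * a

/-- The subalgebra of `YMFree` generated by the matter generators `φ_j, ψ^α`. -/
def ymMatter (D d' N : ℕ) : Subalgebra ℂ (YMFree D d' N) :=
  Algebra.adjoin ℂ
    (Set.range fun y : Fin d' ⊕ Fin N => (FreeAlgebra.ι ℂ (Sum.inr y) : YMFree D d' N))

/-- The Yang–Mills relation element `r_m`. -/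
def ymR (Γ : Fin D → Matrix (Fin N) (Fin N) ℂ) (m : Fin D) : YMFree D d' N :=
  (∑ i, ymBr (ymA i) (ymBr (ymA i) (ymA m)))
    + (∑ j, ymBr (ymPhi j) (ymBr (ymPhi j) (ymA m)))
    - (1 / 2 : ℂ) • ∑ α, ∑ β, Γ m α β • (ymPsi α * ymPsi β + ymPsi β * ymPsi α)

/-- The Yang–Mills relation element `r'_j`. -/
def ymR' (u : Fin d' → YMFree D d' N) (j : Fin d') : YMFree D d' N :=
  (∑ i, ymBr (ymA i) (ymBr (ymA i) (ymPhi j))) + u j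

/-- The Yang–Mills relation element `r''_α`. -/
def ymR'' (Γ : Fin D → Matrix (Fin N) (Fin N) ℂ) (v : Fin N → YMFree D d' N)
    (α : Fin N) : YMFree D d' N :=
  (∑ i, ∑ β, Γ i α β • ymBr (ymA i) (ymPsi β)) + v α

/-- The relation identifying all Yang–Mills relation elements with `0`. -/
def ymRel (Γ : Fin D → Matrix (Fin N) (Fin N) ℂ) (u : Fin d' → YMFree D d' N)
    (v : Fin N → YMFree D d' N) : YMFree D d' N → YMFree D d' N → Prop :=
  fun a b => ((∃ m, a = ymR Γ m) ∨ (∃ j, a = ymR' u j) ∨ (∃ α, a = ymR'' Γ v α)) ∧ b = 0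

/-- The Yang–Mills algebra `YM₀`: the quotient of the free algebra by the two-sided ideal
generated by the Yang–Mills relation elements. -/
abbrev YMQuot (Γ : Fin D → Matrix (Fin N) (Fin N) ℂ) (u : Fin d' → YMFree D d' N)
    (v : Fin N → YMFree D d' N) := RingQuot (ymRel Γ u v)

/-- The quotient map `F → YM₀`. -/
def ymPi (Γ : Fin D → Matrix (Fin N) (Fin N) ℂ) (u : Fin d' → YMFree D d' N)
    (v : Fin N → YMFree D d' N) : YMFree D d' N →ₐ[ℂ] YMQuot Γ u v :=
  RingQuot.mkAlgHom ℂ (ymRel Γ u v)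

end

/-- if each `Γ^m` is symmetric and
`Σ_j (φ_j u_j − u_j φ_j) + Σ_α (ψ^α v_α + v_α ψ^α) = 0`, then the Yang–Mills relation
elements satisfy the Noether (gauge) identity
`Σ_m [A_m, r_m] + Σ_j [φ_j, r'_j] + Σ_α {ψ^α, r''_α} = 0` in the free algebra. -/
theorem statement5
    (D d' N : ℕ) (Γ : Fin D → Matrix (Fin N) (Fin N) ℂ)
    (u : Fin d' → YMFree D d' N) (v : Fin N → YMFree D d' N)
    (hu : ∀ j, u j ∈ ymMatter D d' N) (hv : ∀ α, v α ∈ ymMatter D d' N)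
    (hΓsym : ∀ (m : Fin D) (α β : Fin N), Γ m α β = Γ m β α)
    (hGauge : ∑ j, (ymPhi j * u j - u j * ymPhi j)
        + ∑ α, (ymPsi α * v α + v α * ymPsi α) = (0 : YMFree D d' N)) :
    ∑ m, (ymA m * ymR Γ m - ymR Γ m * ymA m)
      + ∑ j, (ymPhi j * ymR' u j - ymR' u j * ymPhi j)
      + ∑ α, (ymPsi α * ymR'' Γ v α + ymR'' Γ v α * ymPsi α) = 0 := by
  classical
  have key : ∀ a b : YMFree D d' N,
      (a * ymBr b (ymBr b a) - ymBr b (ymBr b a) * a)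
        + (b * ymBr a (ymBr a b) - ymBr a (ymBr a b) * b) = 0 := by
    intro a b; simp only [ymBr]; noncomm_ring
  -- Expansion of the three sums
  have e1 : ∑ m, (ymA m * ymR Γ m - ymR Γ m * ymA m)
      = (∑ m, ∑ i, (ymA m * ymBr (ymA i) (ymBr (ymA i) (ymA m))
            - ymBr (ymA i) (ymBr (ymA i) (ymA m)) * ymA m : YMFree D d' N))
        + (∑ m, ∑ j, (ymA m * ymBr (ymPhi j) (ymBr (ymPhi j) (ymA m))
            - ymBr (ymPhi j) (ymBr (ymPhi j) (ymA m)) * ymA m : YMFree D d' N))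
        - ∑ m, (1 / 2 : ℂ) •
            (ymA m * (∑ α, ∑ β, Γ m α β • (ymPsi α * ymPsi β + ymPsi β * ymPsi α))
              - (∑ α, ∑ β, Γ m α β • (ymPsi α * ymPsi β + ymPsi β * ymPsi α)) * ymA m
              : YMFree D d' N) := by
    rw [← Finset.sum_add_distrib, ← Finset.sum_sub_distrib]
    refine Finset.sum_congr rfl fun m _ => ?_
    simp only [ymR, mul_add, add_mul, mul_sub, sub_mul, mul_smul_comm, smul_mul_assoc,
      smul_sub, Finset.mul_sum, Finset.sum_mul, Finset.sum_sub_distrib]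
    abel
  have e2 : ∑ j, (ymPhi j * ymR' u j - ymR' u j * ymPhi j)
      = (∑ j, ∑ i, (ymPhi j * ymBr (ymA i) (ymBr (ymA i) (ymPhi j))
            - ymBr (ymA i) (ymBr (ymA i) (ymPhi j)) * ymPhi j : YMFree D d' N))
        + ∑ j, (ymPhi j * u j - u j * ymPhi j) := by
    rw [← Finset.sum_add_distrib]
    refine Finset.sum_congr rfl fun j _ => ?_
    simp only [ymR', mul_add, add_mul, Finset.mul_sum, Finset.sum_mul,
      Finset.sum_sub_distrib]
    abel
  have e3 : ∑ α, (ymPsi α * ymR'' Γ v α + ymR'' Γ v α * ymPsi α)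
      = (∑ α, (ymPsi α * (∑ i, ∑ β, Γ i α β • ymBr (ymA i) (ymPsi β))
            + (∑ i, ∑ β, Γ i α β • ymBr (ymA i) (ymPsi β)) * ymPsi α : YMFree D d' N))
        + ∑ α, (ymPsi α * v α + v α * ymPsi α) := by
    rw [← Finset.sum_add_distrib]
    refine Finset.sum_congr rfl fun α _ => ?_
    simp only [ymR'', mul_add, add_mul]
    abel
  -- Part A: the pure gauge-field cubic part vanishes
  have hA : (∑ m, ∑ i, (ymA m * ymBr (ymA i) (ymBr (ymA i) (ymA m))
        - ymBr (ymA i) (ymBr (ymA i) (ymA m)) * ymA m : YMFree D d' N)) = 0 := by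
    have hcomm : (∑ m, ∑ i, (ymA i * ymBr (ymA m) (ymBr (ymA m) (ymA i))
          - ymBr (ymA m) (ymBr (ymA m) (ymA i)) * ymA i : YMFree D d' N))
        = ∑ m, ∑ i, (ymA m * ymBr (ymA i) (ymBr (ymA i) (ymA m))
          - ymBr (ymA i) (ymBr (ymA i) (ymA m)) * ymA m : YMFree D d' N) :=
      Finset.sum_comm
    have h2 : (∑ m, ∑ i, (ymA m * ymBr (ymA i) (ymBr (ymA i) (ymA m))
          - ymBr (ymA i) (ymBr (ymA i) (ymA m)) * ymA m : YMFree D d' N))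
        + (∑ m, ∑ i, (ymA i * ymBr (ymA m) (ymBr (ymA m) (ymA i))
          - ymBr (ymA m) (ymBr (ymA m) (ymA i)) * ymA i : YMFree D d' N)) = 0 := by
      rw [← Finset.sum_add_distrib]
      refine Finset.sum_eq_zero fun m _ => ?_
      rw [← Finset.sum_add_distrib]
      exact Finset.sum_eq_zero fun i _ => key (ymA m) (ymA i)
    rw [hcomm] at h2
    have h3 : (2 : ℂ) • (∑ m, ∑ i, (ymA m * ymBr (ymA i) (ymBr (ymA i) (ymA m))
          - ymBr (ymA i) (ymBr (ymA i) (ymA m)) * ymA m : YMFree D d' N)) = 0 := by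
      rw [two_smul]; exact h2
    rcases smul_eq_zero.mp h3 with h | h
    · exact absurd h two_ne_zero
    · exact h
  -- Part B: the gauge-scalar cross terms cancel
  have hB : (∑ m, ∑ j, (ymA m * ymBr (ymPhi j) (ymBr (ymPhi j) (ymA m))
        - ymBr (ymPhi j) (ymBr (ymPhi j) (ymA m)) * ymA m : YMFree D d' N))
      + (∑ j, ∑ i, (ymPhi j * ymBr (ymA i) (ymBr (ymA i) (ymPhi j))
        - ymBr (ymA i) (ymBr (ymA i) (ymPhi j)) * ymPhi j : YMFree D d' N)) = 0 := by
    have hcomm : (∑ j, ∑ i, (ymPhi j * ymBr (ymA i) (ymBr (ymA i) (ymPhi j))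
          - ymBr (ymA i) (ymBr (ymA i) (ymPhi j)) * ymPhi j : YMFree D d' N))
        = ∑ m, ∑ j, (ymPhi j * ymBr (ymA m) (ymBr (ymA m) (ymPhi j))
          - ymBr (ymA m) (ymBr (ymA m) (ymPhi j)) * ymPhi j : YMFree D d' N) :=
      Finset.sum_comm
    rw [hcomm, ← Finset.sum_add_distrib]
    refine Finset.sum_eq_zero fun m _ => ?_
    rw [← Finset.sum_add_distrib]
    exact Finset.sum_eq_zero fun j _ => key (ymA m) (ymPhi j)
  -- Part C: the fermion anticommutator part equals the Γ-part of r
  have hC : (∑ α, (ymPsi α * (∑ i, ∑ β, Γ i α β • ymBr (ymA i) (ymPsi β))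
        + (∑ i, ∑ β, Γ i α β • ymBr (ymA i) (ymPsi β)) * ymPsi α : YMFree D d' N))
      = ∑ m, (1 / 2 : ℂ) •
          (ymA m * (∑ α, ∑ β, Γ m α β • (ymPsi α * ymPsi β + ymPsi β * ymPsi α))
            - (∑ α, ∑ β, Γ m α β • (ymPsi α * ymPsi β + ymPsi β * ymPsi α)) * ymA m
            : YMFree D d' N) := by
    have c1 : (∑ α, (ymPsi α * (∑ i, ∑ β, Γ i α β • ymBr (ymA i) (ymPsi β))
          + (∑ i, ∑ β, Γ i α β • ymBr (ymA i) (ymPsi β)) * ymPsi α : YMFree D d' N))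
        = ∑ i, ∑ α, ∑ β, Γ i α β •
            (ymPsi α * ymBr (ymA i) (ymPsi β) + ymBr (ymA i) (ymPsi β) * ymPsi α
              : YMFree D d' N) := by
      rw [Finset.sum_comm]
      refine Finset.sum_congr rfl fun α _ => ?_
      simp only [Finset.mul_sum, Finset.sum_mul, mul_smul_comm, smul_mul_assoc,
        ← smul_add, ← Finset.sum_add_distrib]
    have c2 : (∑ m, (1 / 2 : ℂ) •
          (ymA m * (∑ α, ∑ β, Γ m α β • (ymPsi α * ymPsi β + ymPsi β * ymPsi α))
            - (∑ α, ∑ β, Γ m α β • (ymPsi α * ymPsi β + ymPsi β * ymPsi α)) * ymA m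
            : YMFree D d' N))
        = ∑ i, ∑ α, ∑ β, (1 / 2 : ℂ) • (Γ i α β •
            (ymA i * (ymPsi α * ymPsi β + ymPsi β * ymPsi α)
              - (ymPsi α * ymPsi β + ymPsi β * ymPsi α) * ymA i : YMFree D d' N)) := by
      refine Finset.sum_congr rfl fun i _ => ?_
      simp only [Finset.mul_sum, Finset.sum_mul, mul_smul_comm, smul_mul_assoc,
        ← smul_sub, ← Finset.sum_sub_distrib, Finset.smul_sum]
    rw [c1, c2]
    have hswap : (∑ i, ∑ α, ∑ β, Γ i α β •
          (ymPsi α * ymBr (ymA i) (ymPsi β) + ymBr (ymA i) (ymPsi β) * ymPsi α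
            : YMFree D d' N))
        = ∑ i, ∑ α, ∑ β, Γ i α β •
          (ymPsi β * ymBr (ymA i) (ymPsi α) + ymBr (ymA i) (ymPsi α) * ymPsi β
            : YMFree D d' N) := by
      refine Finset.sum_congr rfl fun i _ => ?_
      rw [Finset.sum_comm]
      exact Finset.sum_congr rfl fun α _ => Finset.sum_congr rfl fun β _ => by
        rw [hΓsym i α β]
    calc (∑ i, ∑ α, ∑ β, Γ i α β •
          (ymPsi α * ymBr (ymA i) (ymPsi β) + ymBr (ymA i) (ymPsi β) * ymPsi α
            : YMFree D d' N))
        = (1 / 2 : ℂ) • (∑ i, ∑ α, ∑ β, Γ i α β •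
            (ymPsi α * ymBr (ymA i) (ymPsi β) + ymBr (ymA i) (ymPsi β) * ymPsi α
              : YMFree D d' N))
          + (1 / 2 : ℂ) • (∑ i, ∑ α, ∑ β, Γ i α β •
            (ymPsi β * ymBr (ymA i) (ymPsi α) + ymBr (ymA i) (ymPsi α) * ymPsi β
              : YMFree D d' N)) := by
          rw [← hswap, ← add_smul]; norm_num
      _ = ∑ i, ∑ α, ∑ β, (1 / 2 : ℂ) • (Γ i α β •
            (ymA i * (ymPsi α * ymPsi β + ymPsi β * ymPsi α)
              - (ymPsi α * ymPsi β + ymPsi β * ymPsi α) * ymA i : YMFree D d' N)) := by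
          simp only [Finset.smul_sum, ← Finset.sum_add_distrib]
          refine Finset.sum_congr rfl fun i _ => Finset.sum_congr rfl fun α _ =>
            Finset.sum_congr rfl fun β _ => ?_
          rw [← smul_add, ← smul_add]
          congr 1
          congr 1
          simp only [ymBr]
          noncomm_ring
  -- Assemble
  rw [e1, e2, e3, hA, hC]
  rw [show (∑ m, ∑ j, (ymA m * ymBr (ymPhi j) (ymBr (ymPhi j) (ymA m))
        - ymBr (ymPhi j) (ymBr (ymPhi j) (ymA m)) * ymA m : YMFree D d' N))
      = -(∑ j, ∑ i, (ymPhi j * ymBr (ymA i) (ymBr (ymA i) (ymPhi j))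
        - ymBr (ymA i) (ymBr (ymA i) (ymPhi j)) * ymPhi j : YMFree D d' N)) from
      eq_neg_of_add_eq_zero_left hB]
  rw [show (∑ j, (ymPhi j * u j - u j * ymPhi j))
      = -(∑ α, (ymPsi α * v α + v α * ymPsi α) : YMFree D d' N) from
      eq_neg_of_add_eq_zero_left hGauge]
  abel
end

section
/- For each 1 ≤ k ≤ D let ∂_k be the unique ℂ-linear derivation of the free algebra F with ∂_k(A_i) = δ_{ki}·1, ∂_k(φ_j) = 0 and ∂_k(ψ^α) = 0. Then ∂_k(r_m) = 0, ∂_k(r'_j) = 0 and ∂_k(r''_α) = 0 for all indices m, j, α. Consequently each ∂_k maps the two-sided ideal generated by the Yang–Mills relation elements into itself and induces a derivation ∂_k of YM_0 satisfying ∂_k(A_i) = δ_{ki}·1, ∂_k(φ_j) = 0, ∂_k(ψ^α) = 0 on the images of the generators; moreover the induced derivations ∂_1, …, ∂_D of YM_0 pairwise commute. -/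
open scoped BigOperators

/-!
The derivations `∂_k` kill the relations because `∂_k` sends every generator to a scalar, and
scalars are central: in each relation every term is a (nested) commutator involving an `A_i`,
or a polynomial in the matter fields, on which `∂_k` vanishes. A derivation `d` preserving the
relations descends to the quotient because `a ↦ (a, d a)` is an algebra map into the dual
numbers, which passes through `RingQuot` by its universal property. Two derivations of a free
algebra sending all generators to scalars commute, since their commutator is again a derivation
and vanishes on generators; this commutation is inherited by the quotient.
-/

-- Mathlib's `Derivation` requires a commutative algebra, so a Leibniz predicate is used instead.
def IsDerivation {R A : Type*} [CommSemiring R] [Semiring A] [Algebra R A]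
    (d : A →ₗ[R] A) : Prop :=
  ∀ x y, d (x * y) = d x * y + x * d y

namespace IsDerivation

section Ring

variable {R A : Type*} [CommSemiring R] [Ring A] [Algebra R A] {d d₁ d₂ : A →ₗ[R] A}

theorem map_one_eq_zero (hd : IsDerivation d) : d 1 = 0 := by
  simpa using hd 1 1

theorem map_algebraMap (hd : IsDerivation d) (c : R) : d (algebraMap R A c) = 0 := by
  rw [Algebra.algebraMap_eq_smul_one, map_smul, hd.map_one_eq_zero, smul_zero]

theorem map_eq_zero_of_mem_adjoin (hd : IsDerivation d) {s : Set A} (hs : ∀ x ∈ s, d x = 0)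
    {x : A} (hx : x ∈ Algebra.adjoin R s) : d x = 0 := by
  induction hx using Algebra.adjoin_induction with
  | mem x hx => exact hs x hx
  | algebraMap c => exact hd.map_algebraMap c
  | add x y _ _ hx hy => rw [map_add, hx, hy, add_zero]
  | mul x y _ _ hx hy => rw [hd, hx, hy, zero_mul, mul_zero, add_zero]

theorem comp_sub_comp (hd₁ : IsDerivation d₁) (hd₂ : IsDerivation d₂) :
    IsDerivation (d₁ ∘ₗ d₂ - d₂ ∘ₗ d₁) := by
  intro x y
  simp only [LinearMap.sub_apply, LinearMap.comp_apply, hd₁ _, hd₂ _, map_add, sub_mul, mul_sub]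
  abel

end Ring

section FreeAlgebra

variable {R X : Type*} [CommRing R] {d d₁ d₂ : FreeAlgebra R X →ₗ[R] FreeAlgebra R X}

theorem eq_zero_of_map_ι (hd : IsDerivation d) (h : ∀ x, d (FreeAlgebra.ι R x) = 0) :
    d = 0 := by
  ext1 a
  refine hd.map_eq_zero_of_mem_adjoin (s := Set.range (FreeAlgebra.ι R)) ?_ ?_
  · rintro _ ⟨x, rfl⟩
    exact h x
  · rw [FreeAlgebra.adjoin_range_ι]
    trivial

theorem comp_comm_of_map_ι_mem_range (hd₁ : IsDerivation d₁) (hd₂ : IsDerivation d₂)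
    (h₁ : ∀ x, d₁ (FreeAlgebra.ι R x) ∈ Set.range (algebraMap R _))
    (h₂ : ∀ x, d₂ (FreeAlgebra.ι R x) ∈ Set.range (algebraMap R _)) :
    d₁ ∘ₗ d₂ = d₂ ∘ₗ d₁ := by
  refine sub_eq_zero.mp <| (hd₁.comp_sub_comp hd₂).eq_zero_of_map_ι fun x => ?_
  obtain ⟨c₁, hc₁⟩ := h₁ x
  obtain ⟨c₂, hc₂⟩ := h₂ x
  simp [← hc₁, ← hc₂, hd₁.map_algebraMap, hd₂.map_algebraMap]

end FreeAlgebra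

section RingQuot

variable {R A B : Type*} [CommSemiring R] [Ring A] [Algebra R A] [Ring B] [Algebra R B]
  {d d₁ d₂ : A →ₗ[R] A}

-- `d` is a derivation exactly when this map, `a ↦ (f a, f (d a))`, is multiplicative.
def dualNumberHom (hd : IsDerivation d) (f : A →ₐ[R] B) : A →ₐ[R] TrivSqZeroExt B B :=
  AlgHom.ofLinearMap
    (f.toLinearMap.prod (f.toLinearMap ∘ₗ d) : A →ₗ[R] TrivSqZeroExt B B)
    (TrivSqZeroExt.ext (map_one f) (show f (d 1) = 0 by rw [hd.map_one_eq_zero, map_zero]))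
    (fun x y => TrivSqZeroExt.ext (map_mul f x y)
      (show f (d (x * y)) = f x * f (d y) + f (d x) * f y by
        rw [hd, map_add, map_mul, map_mul, add_comm]))

@[simp]
theorem fst_dualNumberHom (hd : IsDerivation d) (f : A →ₐ[R] B) (a : A) :
    (hd.dualNumberHom f a).fst = f a := rfl

@[simp]
theorem snd_dualNumberHom (hd : IsDerivation d) (f : A →ₐ[R] B) (a : A) :
    (hd.dualNumberHom f a).snd = f (d a) := rfl

variable {r : A → A → Prop}

def ringQuotDualNumberHom (hd : IsDerivation d)
    (hr : ∀ a b, r a b → RingQuot.mkAlgHom R r (d a) = RingQuot.mkAlgHom R r (d b)) :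
    RingQuot r →ₐ[R] TrivSqZeroExt (RingQuot r) (RingQuot r) :=
  RingQuot.liftAlgHom R ⟨hd.dualNumberHom (RingQuot.mkAlgHom R r), fun a b hab =>
    TrivSqZeroExt.ext (by simp [RingQuot.mkAlgHom_rel R hab]) (by simp [hr a b hab])⟩

def ringQuotLift (hd : IsDerivation d)
    (hr : ∀ a b, r a b → RingQuot.mkAlgHom R r (d a) = RingQuot.mkAlgHom R r (d b)) :
    RingQuot r →ₗ[R] RingQuot r where
  toFun x := (hd.ringQuotDualNumberHom hr x).snd
  map_add' x y := by rw [map_add, TrivSqZeroExt.snd_add]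
  map_smul' c x := by rw [map_smul, TrivSqZeroExt.snd_smul]; rfl

variable (hd : IsDerivation d)
  (hr : ∀ a b, r a b → RingQuot.mkAlgHom R r (d a) = RingQuot.mkAlgHom R r (d b))

theorem ringQuotLift_mkAlgHom (a : A) :
    hd.ringQuotLift hr (RingQuot.mkAlgHom R r a) = RingQuot.mkAlgHom R r (d a) := by
  simp [ringQuotLift, ringQuotDualNumberHom, RingQuot.liftAlgHom_mkAlgHom_apply]

theorem isDerivation_ringQuotLift : IsDerivation (hd.ringQuotLift hr) := by
  intro x y
  obtain ⟨a, rfl⟩ := RingQuot.mkAlgHom_surjective R r x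
  obtain ⟨b, rfl⟩ := RingQuot.mkAlgHom_surjective R r y
  simp only [← map_mul, ringQuotLift_mkAlgHom, hd a b, map_add]

theorem ringQuotLift_comp_comm (hd₁ : IsDerivation d₁) (hd₂ : IsDerivation d₂)
    (hr₁ : ∀ a b, r a b → RingQuot.mkAlgHom R r (d₁ a) = RingQuot.mkAlgHom R r (d₁ b))
    (hr₂ : ∀ a b, r a b → RingQuot.mkAlgHom R r (d₂ a) = RingQuot.mkAlgHom R r (d₂ b))
    (h : d₁ ∘ₗ d₂ = d₂ ∘ₗ d₁) :
    hd₁.ringQuotLift hr₁ ∘ₗ hd₂.ringQuotLift hr₂ =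
      hd₂.ringQuotLift hr₂ ∘ₗ hd₁.ringQuotLift hr₁ := by
  refine LinearMap.ext fun x => ?_
  obtain ⟨a, rfl⟩ := RingQuot.mkAlgHom_surjective R r x
  rw [LinearMap.comp_apply, LinearMap.comp_apply, ringQuotLift_mkAlgHom hd₂ hr₂,
    ringQuotLift_mkAlgHom hd₁ hr₁, ringQuotLift_mkAlgHom hd₁ hr₁, ringQuotLift_mkAlgHom hd₂ hr₂]
  exact congrArg _ (LinearMap.congr_fun h a)

end RingQuot

end IsDerivation

section YangMills

variable {D d' N : ℕ}

@[simp]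
theorem ymBr_algebraMap_left (c : ℂ) (x : YMFree D d' N) : ymBr (algebraMap ℂ _ c) x = 0 := by
  rw [ymBr, Algebra.commutes, sub_self]

@[simp]
theorem ymBr_algebraMap_right (c : ℂ) (x : YMFree D d' N) : ymBr x (algebraMap ℂ _ c) = 0 := by
  rw [ymBr, Algebra.commutes, sub_self]

@[simp]
theorem ymBr_zero_left (x : YMFree D d' N) : ymBr 0 x = 0 := by
  simp [ymBr]

@[simp]
theorem ymBr_zero_right (x : YMFree D d' N) : ymBr x 0 = 0 := by
  simp [ymBr]

variable {d : YMFree D d' N →ₗ[ℂ] YMFree D d' N}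

theorem IsDerivation.map_ymBr (hd : IsDerivation d) (a b : YMFree D d' N) :
    d (ymBr a b) = ymBr (d a) b + ymBr a (d b) := by
  simp only [ymBr, map_sub, hd _]
  abel

variable (hd : IsDerivation d) {c : Fin D → ℂ} (hA : ∀ i, d (ymA i) = algebraMap ℂ _ (c i))
  (hφ : ∀ j, d (ymPhi j) = 0) (hψ : ∀ α, d (ymPsi α) = 0)
include hd hφ hψ

theorem IsDerivation.map_eq_zero_of_mem_ymMatter {x : YMFree D d' N}
    (hx : x ∈ ymMatter D d' N) : d x = 0 := by
  refine hd.map_eq_zero_of_mem_adjoin ?_ hx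
  rintro _ ⟨j | α, rfl⟩
  exacts [hφ j, hψ α]

include hA

theorem IsDerivation.map_ymR_eq_zero (Γ : Fin D → Matrix (Fin N) (Fin N) ℂ) (m : Fin D) :
    d (ymR Γ m) = 0 := by
  simp [ymR, hd.map_ymBr, hd _, hA, hφ, hψ]

theorem IsDerivation.map_ymR'_eq_zero {u : Fin d' → YMFree D d' N}
    (hu : ∀ j, u j ∈ ymMatter D d' N)
    (j : Fin d') : d (ymR' u j) = 0 := by
  simp [ymR', hd.map_ymBr, hA, hφ, hd.map_eq_zero_of_mem_ymMatter hφ hψ (hu j)]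

theorem IsDerivation.map_ymR''_eq_zero (Γ : Fin D → Matrix (Fin N) (Fin N) ℂ)
    {v : Fin N → YMFree D d' N}
    (hv : ∀ α, v α ∈ ymMatter D d' N) (α : Fin N) : d (ymR'' Γ v α) = 0 := by
  simp [ymR'', hd.map_ymBr, hA, hψ, hd.map_eq_zero_of_mem_ymMatter hφ hψ (hv α)]

theorem IsDerivation.map_eq_map_of_ymRel {Γ : Fin D → Matrix (Fin N) (Fin N) ℂ}
    {u : Fin d' → YMFree D d' N} {v : Fin N → YMFree D d' N}
    (hu : ∀ j, u j ∈ ymMatter D d' N) (hv : ∀ α, v α ∈ ymMatter D d' N)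
    {a b : YMFree D d' N} (hab : ymRel Γ u v a b) : d a = d b := by
  obtain ⟨⟨m, rfl⟩ | ⟨j, rfl⟩ | ⟨α, rfl⟩, rfl⟩ := hab
  exacts [(hd.map_ymR_eq_zero hA hφ hψ Γ m).trans (map_zero d).symm,
    (hd.map_ymR'_eq_zero hA hφ hψ hu j).trans (map_zero d).symm,
    (hd.map_ymR''_eq_zero hA hφ hψ Γ hv α).trans (map_zero d).symm]

end YangMills

/-- the free-algebra derivations `∂_k` with `∂_k(A_i) = δ_{ki}`,
`∂_k(φ_j) = ∂_k(ψ^α) = 0` kill all Yang–Mills relation elements, map the two-sided ideal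
they generate into itself (equivalently preserve the kernel of the quotient map), and
hence induce pairwise commuting derivations of `YM₀` with the stated values on the images
of the generators. -/
theorem statement8
    (D d' N : ℕ) (Γ : Fin D → Matrix (Fin N) (Fin N) ℂ)
    (u : Fin d' → YMFree D d' N) (v : Fin N → YMFree D d' N)
    (hu : ∀ j, u j ∈ ymMatter D d' N) (hv : ∀ α, v α ∈ ymMatter D d' N)
    (der : Fin D → (YMFree D d' N →ₗ[ℂ] YMFree D d' N))
    (hleib : ∀ (k : Fin D) (x y : YMFree D d' N),
      der k (x * y) = der k x * y + x * der k y)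
    (hA : ∀ k i : Fin D, der k (ymA i) = if k = i then 1 else 0)
    (hphi : ∀ (k : Fin D) (j : Fin d'), der k (ymPhi j) = 0)
    (hpsi : ∀ (k : Fin D) (α : Fin N), der k (ymPsi α) = 0) :
    (∀ k m : Fin D, der k (ymR Γ m) = 0) ∧
    (∀ (k : Fin D) (j : Fin d'), der k (ymR' u j) = 0) ∧
    (∀ (k : Fin D) (α : Fin N), der k (ymR'' Γ v α) = 0) ∧
    (∀ (k : Fin D) (z : YMFree D d' N),
      ymPi Γ u v z = 0 → ymPi Γ u v (der k z) = 0) ∧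
    (∃ δ : Fin D → (YMQuot Γ u v →ₗ[ℂ] YMQuot Γ u v),
      (∀ (k : Fin D) (x y : YMQuot Γ u v), δ k (x * y) = δ k x * y + x * δ k y) ∧
      (∀ (k : Fin D) (z : YMFree D d' N), δ k (ymPi Γ u v z) = ymPi Γ u v (der k z)) ∧
      (∀ k i : Fin D, δ k (ymPi Γ u v (ymA i)) = if k = i then 1 else 0) ∧
      (∀ (k : Fin D) (j : Fin d'), δ k (ymPi Γ u v (ymPhi j)) = 0) ∧
      (∀ (k : Fin D) (α : Fin N), δ k (ymPi Γ u v (ymPsi α)) = 0) ∧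
      (∀ k l : Fin D, (δ k).comp (δ l) = (δ l).comp (δ k))) := by
  have hder : ∀ k, IsDerivation (der k) := hleib
  have hA' : ∀ k i, der k (ymA i) = algebraMap ℂ _ (if k = i then 1 else 0) := fun k i => by
    rw [hA]
    split_ifs <;> simp
  have hι : ∀ k x, der k (FreeAlgebra.ι ℂ x) ∈ Set.range (algebraMap ℂ (YMFree D d' N)) := by
    rintro k (i | j | α)
    exacts [⟨_, (hA' k i).symm⟩, ⟨0, (map_zero _).trans (hphi k j).symm⟩,
      ⟨0, (map_zero _).trans (hpsi k α).symm⟩]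
  have hrel : ∀ k a b, ymRel Γ u v a b → ymPi Γ u v (der k a) = ymPi Γ u v (der k b) :=
    fun k a b hab =>
      congrArg _ ((hder k).map_eq_map_of_ymRel (hA' k) (hphi k) (hpsi k) hu hv hab)
  have hδ : ∀ k z, (hder k).ringQuotLift (hrel k) (ymPi Γ u v z) = ymPi Γ u v (der k z) :=
    fun k => (hder k).ringQuotLift_mkAlgHom (hrel k)
  refine ⟨fun k => (hder k).map_ymR_eq_zero (hA' k) (hphi k) (hpsi k) Γ,
    fun k => (hder k).map_ymR'_eq_zero (hA' k) (hphi k) (hpsi k) hu,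
    fun k => (hder k).map_ymR''_eq_zero (hA' k) (hphi k) (hpsi k) Γ hv,
    fun k z hz => by rw [← hδ, hz, map_zero],
    fun k => (hder k).ringQuotLift (hrel k),
    fun k => (hder k).isDerivation_ringQuotLift (hrel k), hδ,
    fun k i => by rw [hδ, hA, apply_ite (ymPi Γ u v), map_one, map_zero],
    fun k j => by rw [hδ, hphi, map_zero],
    fun k α => by rw [hδ, hpsi, map_zero],
    fun k l => IsDerivation.ringQuotLift_comp_comm _ _ _ _ <|
      (hder k).comp_comm_of_map_ι_mem_range (hder l) (hι k) (hι l)⟩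
end

section
/- The derivation H satisfies H(ω) = 0 in the free algebra F', where ω = Σ_{i=1}^n [q_i, p^i] + Σ_{j=1}^{d'} [Q_j, P^j]. Consequently H maps the two-sided ideal generated by ω into itself and induces a derivation of the quotient algebra K = F'/(ω). -/
open scoped BigOperators

noncomputable section

/-- Generators `q_1,…,q_n, p^1,…,p^n, Q_1,…,Q_{d'}, P^1,…,P^{d'}`. -/
abbrev KVar (n d' : ℕ) := Fin n ⊕ (Fin n ⊕ (Fin d' ⊕ Fin d'))

/-- The free unital associative ℂ-algebra on the generators. -/
abbrev KFree (n d' : ℕ) := FreeAlgebra ℂ (KVar n d')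

variable {n d' : ℕ}

/-- The generator `q_i`. -/
def kq (i : Fin n) : KFree n d' := FreeAlgebra.ι ℂ (Sum.inl i)

/-- The generator `p^i`. -/
def kp (i : Fin n) : KFree n d' := FreeAlgebra.ι ℂ (Sum.inr (Sum.inl i))

/-- The generator `Q_j`. -/
def kQ (j : Fin d') : KFree n d' := FreeAlgebra.ι ℂ (Sum.inr (Sum.inr (Sum.inl j)))

/-- The generator `P^j`. -/
def kP (j : Fin d') : KFree n d' := FreeAlgebra.ι ℂ (Sum.inr (Sum.inr (Sum.inr j)))

/-- Commutator `[a,b] = ab - ba`. -/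
def kBr (a b : KFree n d') : KFree n d' := a * b - b * a

/-- The element `ω = Σ_i [q_i, p^i] + Σ_j [Q_j, P^j]`. -/
def kOmega (n d' : ℕ) : KFree n d' :=
  (∑ i, kBr (kq i) (kp i)) + ∑ j, kBr (kQ j) (kP j)

/-- The relation identifying `ω` with `0`. -/
def kRel (n d' : ℕ) : KFree n d' → KFree n d' → Prop :=
  fun a b => a = kOmega n d' ∧ b = 0

/-- The algebra `K = F'/(ω)`, quotient by the two-sided ideal generated by `ω`. -/
abbrev KQuot (n d' : ℕ) := RingQuot (kRel n d')

/-- The quotient map `F' → K`. -/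
def kPi (n d' : ℕ) : KFree n d' →ₐ[ℂ] KQuot n d' := RingQuot.mkAlgHom ℂ (kRel n d')

end

/-!
Applying `H` to `ω` kills `[p^i, p^i]` and `[P^j, P^j]`; what is left is `-Σ_j [Q_j, u_j] = 0`
plus sums of terms `[a, [b, [b, a]]]` over pairs of generators, and these cancel in pairs because
`[a, [b, [b, a]]] + [b, [a, [a, b]]] = -[[a, b], [a, b]] = 0` by the Jacobi identity.

Once `H ω = 0`, with `π : F' → K` the quotient map, `x ↦ (π x, π (H x))` is an algebra
homomorphism into the trivial square-zero extension `K ⊕ K` vanishing on `ω`, so it factors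
through `K`; its second component is the derivation induced on `K`.
-/

section LieRing

variable {L ι κ : Type*} [LieRing L]

theorem lie_lie_lie_add_swap_eq_zero (a b : L) :
    ⁅a, ⁅b, ⁅b, a⁆⁆⁆ + ⁅b, ⁅a, ⁅a, b⁆⁆⁆ = 0 := by
  have jacobi := lie_lie a b ⁅a, b⁆
  rw [lie_self, eq_comm, sub_eq_zero] at jacobi
  rw [← lie_skew b a, lie_neg, lie_neg, jacobi, neg_add_cancel]

theorem sum_sum_lie_lie_lie_add_sum_sum_eq_zero (s : Finset ι) (t : Finset κ)
    (a : ι → L) (b : κ → L) :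
    ∑ i ∈ s, ∑ j ∈ t, ⁅a i, ⁅b j, ⁅b j, a i⁆⁆⁆ + ∑ j ∈ t, ∑ i ∈ s, ⁅b j, ⁅a i, ⁅a i, b j⁆⁆⁆ = 0 := by
  rw [Finset.sum_comm (s := t), ← Finset.sum_add_distrib]
  simp only [← Finset.sum_add_distrib, lie_lie_lie_add_swap_eq_zero, Finset.sum_const_zero]

theorem sum_sum_lie_lie_lie_eq_zero [IsAddTorsionFree L] (s : Finset ι) (a : ι → L) :
    ∑ i ∈ s, ∑ j ∈ s, ⁅a i, ⁅a j, ⁅a j, a i⁆⁆⁆ = 0 := by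
  have h := sum_sum_lie_lie_lie_add_sum_sum_eq_zero s s a a
  rw [← two_nsmul] at h
  exact (nsmul_eq_zero_iff_right two_ne_zero).mp h

end LieRing

theorem map_lie_of_leibniz {A F : Type*} [Ring A] [FunLike F A A] [AddMonoidHomClass F A A]
    (H : F) (hH : ∀ x y, H (x * y) = H x * y + x * H y) (a b : A) :
    H ⁅a, b⁆ = ⁅H a, b⁆ + ⁅a, H b⁆ := by
  simp only [Ring.lie_def, map_sub, hH]
  abel

section TrivSqZeroExt

variable {R A B : Type*} [CommSemiring R] [Semiring A] [Algebra R A] [Ring B] [Algebra R B]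

def AlgHom.toTrivSqZeroExt (f : A →ₐ[R] B) (D : A →ₗ[R] B)
    (hD : ∀ x y, D (x * y) = D x * f y + f x * D y) : A →ₐ[R] TrivSqZeroExt B B :=
  AlgHom.ofLinearMap
    { toFun x := (f x, D x)
      map_add' x y := TrivSqZeroExt.ext (map_add f x y) (map_add D x y)
      map_smul' c x := TrivSqZeroExt.ext (map_smul f c x) (map_smul D c x) }
    (TrivSqZeroExt.ext (map_one f) (by
      change D 1 = 0
      have h := hD 1 1
      simp only [map_one, mul_one, one_mul] at h
      exact left_eq_add.mp h))
    (fun x y => TrivSqZeroExt.ext (map_mul f x y) (by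
      change D (x * y) = f x • D y + MulOpposite.op (f y) • D x
      rw [hD, smul_eq_mul, op_smul_eq_mul, add_comm]))

end TrivSqZeroExt

namespace RingQuot

variable {R A : Type*} [CommSemiring R] [Ring A] [Algebra R A] {r : A → A → Prop}

theorem exists_leibniz_lift (H : A →ₗ[R] A) (hH : ∀ x y, H (x * y) = H x * y + x * H y)
    (hr : ∀ ⦃x y⦄, r x y → mkAlgHom R r (H x) = mkAlgHom R r (H y)) :
    ∃ δ : RingQuot r →ₗ[R] RingQuot r, (∀ x y, δ (x * y) = δ x * y + x * δ y) ∧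
      ∀ z, δ (mkAlgHom R r z) = mkAlgHom R r (H z) := by
  set π := mkAlgHom R r
  let Φ := π.toTrivSqZeroExt (π.toLinearMap ∘ₗ H) (fun x y => by simp [hH])
  have hΦ : ∀ ⦃x y⦄, r x y → Φ x = Φ y := fun x y hxy =>
    TrivSqZeroExt.ext (mkAlgHom_rel R hxy) (hr hxy)
  let Ψ := liftAlgHom R ⟨Φ, hΦ⟩
  have hΨ : ∀ z, Ψ (π z) = Φ z := liftAlgHom_mkAlgHom_apply R Φ hΦ
  have hfst : ∀ x, (Ψ x).fst = x := by
    intro x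
    obtain ⟨z, rfl⟩ := mkAlgHom_surjective R r x
    rw [hΨ]
    rfl
  refine ⟨(TrivSqZeroExt.sndHom _ _).restrictScalars R ∘ₗ Ψ.toLinearMap, fun x y => ?_,
    fun z => congrArg TrivSqZeroExt.snd (hΨ z)⟩
  change (Ψ (x * y)).snd = (Ψ x).snd * y + x * (Ψ y).snd
  rw [map_mul, TrivSqZeroExt.snd_mul, hfst, hfst, smul_eq_mul, op_smul_eq_mul, add_comm]

end RingQuot

section Hamiltonian

attribute [local instance] LieRing.ofAssociativeRing

theorem kBr_eq_lie {n d' : ℕ} (a b : KFree n d') : kBr a b = ⁅a, b⁆ := (Ring.lie_def a b).symm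

theorem hamiltonian_omega_eq_zero {n d' : ℕ} (u : Fin d' → KFree n d')
    (hu_sum : ∑ j, kBr (kQ j) (u j) = (0 : KFree n d'))
    (H : KFree n d' →ₗ[ℂ] KFree n d')
    (hleib : ∀ x y : KFree n d', H (x * y) = H x * y + x * H y)
    (hq : ∀ i : Fin n, H (kq i) = kp i)
    (hQ : ∀ j : Fin d', H (kQ j) = kP j)
    (hp : ∀ m : Fin n, H (kp m) =
      -(∑ i, kBr (kq i) (kBr (kq i) (kq m))) - ∑ j, kBr (kQ j) (kBr (kQ j) (kq m)))
    (hP : ∀ j : Fin d', H (kP j) =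
      -(∑ i, kBr (kq i) (kBr (kq i) (kQ j))) - u j) :
    H (kOmega n d') = 0 := by
  simp only [kBr_eq_lie] at hu_sum hp hP
  have hqq := sum_sum_lie_lie_lie_eq_zero (L := KFree n d') Finset.univ kq
  have hqQ :=
    sum_sum_lie_lie_lie_add_sum_sum_eq_zero (L := KFree n d') Finset.univ Finset.univ kq kQ
  rw [kOmega, map_add, map_sum, map_sum]
  simp only [kBr_eq_lie, map_lie_of_leibniz H hleib, hq, hQ, hp, hP, lie_self, zero_add,
    lie_sub, lie_neg, lie_sum, Finset.sum_sub_distrib, Finset.sum_neg_distrib, hqq, hu_sum]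
  linear_combination (norm := abel) -hqQ

end Hamiltonian

theorem statement9_general
    (n d' : ℕ)
    (u : Fin d' → KFree n d')
    (hu_sum : ∑ j, kBr (kQ j) (u j) = (0 : KFree n d'))
    (H : KFree n d' →ₗ[ℂ] KFree n d')
    (hleib : ∀ x y : KFree n d', H (x * y) = H x * y + x * H y)
    (hq : ∀ i : Fin n, H (kq i) = kp i)
    (hQ : ∀ j : Fin d', H (kQ j) = kP j)
    (hp : ∀ m : Fin n, H (kp m) =
      -(∑ i, kBr (kq i) (kBr (kq i) (kq m))) - ∑ j, kBr (kQ j) (kBr (kQ j) (kq m)))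
    (hP : ∀ j : Fin d', H (kP j) =
      -(∑ i, kBr (kq i) (kBr (kq i) (kQ j))) - u j) :
    H (kOmega n d') = 0 ∧
    (∀ z : KFree n d', kPi n d' z = 0 → kPi n d' (H z) = 0) ∧
    (∃ δ : KQuot n d' →ₗ[ℂ] KQuot n d',
      (∀ x y : KQuot n d', δ (x * y) = δ x * y + x * δ y) ∧
      (∀ z : KFree n d', δ (kPi n d' z) = kPi n d' (H z))) := by
  have hω := hamiltonian_omega_eq_zero u hu_sum H hleib hq hQ hp hP
  obtain ⟨δ, hδ, hδπ⟩ := RingQuot.exists_leibniz_lift H hleib (r := kRel n d') <| by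
    rintro _ _ ⟨rfl, rfl⟩
    simp only [hω, map_zero]
  replace hδπ : ∀ z, δ (kPi n d' z) = kPi n d' (H z) := hδπ
  refine ⟨hω, fun z hz => ?_, δ, hδ, hδπ⟩
  rw [← hδπ, hz, map_zero]

/-- the Hamiltonian derivation `H` satisfies `H(ω) = 0`; consequently it maps
the two-sided ideal generated by `ω` (the kernel of the quotient map) into itself and
induces a derivation of the quotient algebra `K = F'/(ω)`. -/
theorem statement9
    (n d' : ℕ)
    (u : Fin d' → KFree n d')
    (hu_mem : ∀ j, u j ∈ Algebra.adjoin ℂ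
      (Set.range fun j' : Fin d' => (kQ j' : KFree n d')))
    (hu_sum : ∑ j, kBr (kQ j) (u j) = (0 : KFree n d'))
    (H : KFree n d' →ₗ[ℂ] KFree n d')
    (hleib : ∀ x y : KFree n d', H (x * y) = H x * y + x * H y)
    (hq : ∀ i : Fin n, H (kq i) = kp i)
    (hQ : ∀ j : Fin d', H (kQ j) = kP j)
    (hp : ∀ m : Fin n, H (kp m) =
      -(∑ i, kBr (kq i) (kBr (kq i) (kq m))) - ∑ j, kBr (kQ j) (kBr (kQ j) (kq m)))
    (hP : ∀ j : Fin d', H (kP j) =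
      -(∑ i, kBr (kq i) (kBr (kq i) (kQ j))) - u j) :
    H (kOmega n d') = 0 ∧
    (∀ z : KFree n d', kPi n d' z = 0 → kPi n d' (H z) = 0) ∧
    (∃ δ : KQuot n d' →ₗ[ℂ] KQuot n d',
      (∀ x y : KQuot n d', δ (x * y) = δ x * y + x * δ y) ∧
      (∀ z : KFree n d', δ (kPi n d' z) = kPi n d' (H z))) :=
  statement9_general n d' u hu_sum H hleib hq hQ hp hP
end

section
/- Let 1 ≤ d ≤ D and let ∂_1, …, ∂_d denote the derivations of YM_0 induced by the free-algebra derivations with ∂_k(A_i) = δ_{ki}·1, ∂_k(φ_j) = 0, ∂_k(ψ^α) = 0 (these descend to YM_0 since they annihilate all relation elements). Then YM_0 is generated as a unital ℂ-algebra by the truncated Yang–Mills subalgebra ⋂_{k=1}^d ker ∂_k together with the images of A_1, …, A_d. -/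
open scoped BigOperators

/-- for `1 ≤ d ≤ D`, the Yang–Mills algebra `YM₀` is generated as a unital
ℂ-algebra by the truncated Yang–Mills subalgebra `⋂_{k=1}^d ker ∂_k` (where `∂_k` are the
induced derivations of `YM₀`, characterized by the Leibniz rule and their values on the
images of the generators) together with the images of `A_1, …, A_d`. -/
theorem statement12
    (D d' N : ℕ) (Γ : Fin D → Matrix (Fin N) (Fin N) ℂ)
    (u : Fin d' → YMFree D d' N) (v : Fin N → YMFree D d' N)
    (hu : ∀ j, u j ∈ ymMatter D d' N) (hv : ∀ α, v α ∈ ymMatter D d' N)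
    (d : ℕ) (hd1 : 1 ≤ d) (hdD : d ≤ D)
    (δ : Fin D → (YMQuot Γ u v →ₗ[ℂ] YMQuot Γ u v))
    (hleib : ∀ (k : Fin D) (x y : YMQuot Γ u v), δ k (x * y) = δ k x * y + x * δ k y)
    (hA : ∀ k i : Fin D, δ k (ymPi Γ u v (ymA i)) = if k = i then 1 else 0)
    (hphi : ∀ (k : Fin D) (j : Fin d'), δ k (ymPi Γ u v (ymPhi j)) = 0)
    (hpsi : ∀ (k : Fin D) (α : Fin N), δ k (ymPi Γ u v (ymPsi α)) = 0) :
    Algebra.adjoin ℂ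
      (((⨅ k : Fin d, LinearMap.ker (δ (Fin.castLE hdD k)) :
          Submodule ℂ (YMQuot Γ u v)) : Set (YMQuot Γ u v))
        ∪ Set.range (fun k : Fin d => ymPi Γ u v (ymA (Fin.castLE hdD k)))) = ⊤ := by
  rw [eq_top_iff]
  have htop : Algebra.adjoin ℂ
      (Set.range (fun x : YMVar D d' N => ymPi Γ u v (FreeAlgebra.ι ℂ x))) = ⊤ := by
    have h1 : Subalgebra.map (ymPi Γ u v)
        (Algebra.adjoin ℂ (Set.range (FreeAlgebra.ι ℂ : YMVar D d' N → YMFree D d' N))) = ⊤ := by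
      rw [FreeAlgebra.adjoin_range_ι, Algebra.map_top]
      exact (AlgHom.range_eq_top _).2 (RingQuot.mkAlgHom_surjective ℂ (ymRel Γ u v))
    rw [AlgHom.map_adjoin, ← Set.range_comp] at h1
    exact h1
  rw [← htop]
  apply Algebra.adjoin_le
  rintro _ ⟨x, rfl⟩
  rcases x with i | y
  · by_cases h : (i : ℕ) < d
    · refine Algebra.subset_adjoin (Set.mem_union_right _ ⟨⟨i, h⟩, ?_⟩)
      rfl
    · refine Algebra.subset_adjoin (Set.mem_union_left _ ?_)
      simp only [SetLike.mem_coe, Submodule.mem_iInf, LinearMap.mem_ker]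
      intro k
      have hne : Fin.castLE hdD k ≠ i := by
        intro hk
        apply h
        rw [← hk]
        exact k.isLt
      have h2 := hA (Fin.castLE hdD k) i
      rw [if_neg hne] at h2
      exact h2
  · refine Algebra.subset_adjoin (Set.mem_union_left _ ?_)
    simp only [SetLike.mem_coe, Submodule.mem_iInf, LinearMap.mem_ker]
    intro k
    rcases y with j | a
    · exact hphi _ j
    · exact hpsi _ a
end

section
/- Assume D ≥ 1 and that Γ^1 is the identity N×N matrix (Γ^1_{αβ} = δ_{αβ}), a normalization available when the Γ-matrices are nondegenerate. In YM_0 write a_i, f_j, s^α for the images of A_i, φ_j, ψ^α, and set q_i = a_{i+1} and p^i = [a_1, a_{i+1}] for 1 ≤ i ≤ D−1, and P^j = [a_1, f_j] for 1 ≤ j ≤ d'. Let S ⊆ YM_0 be the unital subalgebra generated by all q_i, p^i, f_j, P^j, s^α. Then the inner derivation ad(a_1) = [a_1, ·] of YM_0 maps S into itself, i.e. [a_1, x] ∈ S for every x ∈ S. -/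
open scoped BigOperators

noncomputable section

variable {D d' N : ℕ}

/-- The generating set `{q_i} ∪ {p^i} ∪ {f_j} ∪ {P^j} ∪ {s^α}` of the subalgebra `S ⊆ YM₀`,
where `q_i = a_{i+1}`, `p^i = [a_1, a_{i+1}]`, `P^j = [a_1, f_j]`. -/
def ymSGen (Γ : Fin D → Matrix (Fin N) (Fin N) ℂ) (u : Fin d' → YMFree D d' N)
    (v : Fin N → YMFree D d' N) (hD : 0 < D) : Set (YMQuot Γ u v) :=
  (Set.range fun i : Fin (D - 1) =>
      ymPi Γ u v (ymA ⟨(i : ℕ) + 1, by have := i.2; omega⟩))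
    ∪ (Set.range fun i : Fin (D - 1) =>
      ymPi Γ u v (ymBr (ymA ⟨0, hD⟩) (ymA ⟨(i : ℕ) + 1, by have := i.2; omega⟩)))
    ∪ (Set.range fun j : Fin d' => ymPi Γ u v (ymPhi j))
    ∪ (Set.range fun j : Fin d' => ymPi Γ u v (ymBr (ymA ⟨0, hD⟩) (ymPhi j)))
    ∪ (Set.range fun α : Fin N => ymPi Γ u v (ymPsi α))

end

/-!
Since `ad(a_1)` is a derivation, it suffices to check it on the generators of `S`; on `q_i` and
`f_j` it gives the generators `p^i` and `P^j`. For the rest, work in the preimage `T` of `S` in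
the free algebra, a subalgebra containing all relations and all matter elements. Each of
`r_m` (`m ≠ 1`), `r'_j`, `r''_α` is a sum over `i` of terms lying in `T` for `i ≠ 1`, plus terms
built from matter generators; hence its `i = 1` term, which is `[A_1, [A_1, A_m]]`,
`[A_1, [A_1, φ_j]]` resp. (as `Γ^1 = 1`) `[A_1, ψ^α]`, lies in `T` as well.
-/

open Finset

theorem commutator_mem_adjoin_of_forall_mem {R A : Type*} [CommRing R] [Ring A] [Algebra R A]
    {a : A} {s : Set A} (hs : ∀ y ∈ s, a * y - y * a ∈ Algebra.adjoin R s) {x : A}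
    (hx : x ∈ Algebra.adjoin R s) : a * x - x * a ∈ Algebra.adjoin R s := by
  induction hx using Algebra.adjoin_induction with
  | mem y hy => exact hs y hy
  | algebraMap r => simp [Algebra.commutes]
  | add x y _ _ hx hy =>
    convert add_mem hx hy using 1
    noncomm_ring
  | mul x y hx' hy' hx hy =>
    convert add_mem (mul_mem hx hy') (mul_mem hx' hy) using 1
    noncomm_ring

theorem mem_of_sum_mem_of_forall_ne_mem {ι M B : Type*} [Fintype ι] [DecidableEq ι]
    [AddCommGroup M] [SetLike B M] [AddSubgroupClass B M] {T : B} {f : ι → M} (z : ι)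
    (hsum : ∑ i, f i ∈ T) (hne : ∀ i ≠ z, f i ∈ T) : f z ∈ T := by
  rw [← add_sum_erase _ _ (mem_univ z)] at hsum
  exact (add_mem_cancel_right (sum_mem fun i hi => hne i (ne_of_mem_erase hi))).mp hsum

variable {D d' N : ℕ}

theorem ymBr_mem {T : Subalgebra ℂ (YMFree D d' N)} {a b : YMFree D d' N} (ha : a ∈ T)
    (hb : b ∈ T) : ymBr a b ∈ T :=
  sub_mem (mul_mem ha hb) (mul_mem hb ha)

section Preimage

variable (Γ : Fin D → Matrix (Fin N) (Fin N) ℂ) (u : Fin d' → YMFree D d' N)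
  (v : Fin N → YMFree D d' N) (hD : 0 < D)

theorem ymPi_ymBr (a b : YMFree D d' N) :
    ymPi Γ u v (ymBr a b) = ymPi Γ u v a * ymPi Γ u v b - ymPi Γ u v b * ymPi Γ u v a := by
  simp only [ymBr, map_sub, map_mul]

def ymSPreimage : Subalgebra ℂ (YMFree D d' N) :=
  (Algebra.adjoin ℂ (ymSGen Γ u v hD)).comap (ymPi Γ u v)

variable {Γ u v}

theorem mem_ymSPreimage_of_ymRel {r : YMFree D d' N} (hr : ymRel Γ u v r 0) :
    r ∈ ymSPreimage Γ u v hD := by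
  rw [ymSPreimage, Subalgebra.mem_comap, ymPi, RingQuot.mkAlgHom_rel ℂ hr, map_zero]
  exact zero_mem _

theorem ymA_mem_ymSPreimage {m : Fin D} (hm : m ≠ ⟨0, hD⟩) :
    ymA m ∈ ymSPreimage Γ u v hD ∧ ymBr (ymA ⟨0, hD⟩) (ymA m) ∈ ymSPreimage Γ u v hD := by
  have hm0 : (m : ℕ) ≠ 0 := fun h => hm (Fin.ext h)
  obtain ⟨i, rfl⟩ : ∃ i : Fin (D - 1), (⟨(i : ℕ) + 1, Nat.add_lt_of_lt_sub i.2⟩ : Fin D) = m :=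
    ⟨⟨m - 1, by omega⟩, Fin.ext (Nat.sub_add_cancel (Nat.one_le_iff_ne_zero.mpr hm0))⟩
  exact ⟨Algebra.subset_adjoin (Or.inl (Or.inl (Or.inl (Or.inl ⟨i, rfl⟩)))),
    Algebra.subset_adjoin (Or.inl (Or.inl (Or.inl (Or.inr ⟨i, rfl⟩))))⟩

theorem ymPhi_mem_ymSPreimage (j : Fin d') : ymPhi j ∈ ymSPreimage Γ u v hD :=
  Algebra.subset_adjoin (Or.inl (Or.inl (Or.inr ⟨j, rfl⟩)))

theorem ymBr_ymA_zero_ymPhi_mem_ymSPreimage (j : Fin d') :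
    ymBr (ymA ⟨0, hD⟩) (ymPhi j) ∈ ymSPreimage Γ u v hD :=
  Algebra.subset_adjoin (Or.inl (Or.inr ⟨j, rfl⟩))

theorem ymPsi_mem_ymSPreimage (α : Fin N) : ymPsi α ∈ ymSPreimage Γ u v hD :=
  Algebra.subset_adjoin (Or.inr ⟨α, rfl⟩)

theorem ymMatter_le_ymSPreimage : ymMatter D d' N ≤ ymSPreimage Γ u v hD :=
  Algebra.adjoin_le <| by
    rintro _ ⟨j | α, rfl⟩
    · exact ymPhi_mem_ymSPreimage hD j
    · exact ymPsi_mem_ymSPreimage hD α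

theorem ymBr_ymA_zero_ymBr_ymA_mem_ymSPreimage {m : Fin D} (hm : m ≠ ⟨0, hD⟩) :
    ymBr (ymA ⟨0, hD⟩) (ymBr (ymA ⟨0, hD⟩) (ymA m)) ∈ ymSPreimage Γ u v hD := by
  have hR : ymR Γ m ∈ ymSPreimage Γ u v hD :=
    mem_ymSPreimage_of_ymRel hD ⟨Or.inl ⟨m, rfl⟩, rfl⟩
  have hAm : ymA m ∈ ymSPreimage Γ u v hD := (ymA_mem_ymSPreimage hD hm).1
  have hφ : ∑ j, ymBr (ymPhi j) (ymBr (ymPhi j) (ymA m)) ∈ ymSPreimage Γ u v hD :=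
    sum_mem fun j _ =>
      ymBr_mem (ymPhi_mem_ymSPreimage hD j) (ymBr_mem (ymPhi_mem_ymSPreimage hD j) hAm)
  have hψ : (1 / 2 : ℂ) • ∑ α, ∑ β, Γ m α β • (ymPsi α * ymPsi β + ymPsi β * ymPsi α)
      ∈ ymSPreimage Γ u v hD := by
    have hψ (α : Fin N) : ymPsi α ∈ ymSPreimage Γ u v hD := ymPsi_mem_ymSPreimage hD α
    exact Subalgebra.smul_mem _ (sum_mem fun α _ => sum_mem fun β _ => Subalgebra.smul_mem _
      (add_mem (mul_mem (hψ α) (hψ β)) (mul_mem (hψ β) (hψ α))) _) _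
  rw [ymR, sub_eq_add_neg] at hR
  have hsum := (add_mem_cancel_right hφ).mp ((add_mem_cancel_right (neg_mem hψ)).mp hR)
  exact (mem_of_sum_mem_of_forall_ne_mem ⟨0, hD⟩ hsum fun i hi =>
    ymBr_mem (ymA_mem_ymSPreimage hD hi).1 (ymBr_mem (ymA_mem_ymSPreimage hD hi).1 hAm) :)

theorem ymBr_ymA_zero_ymBr_ymA_zero_ymPhi_mem_ymSPreimage
    (hu : ∀ j, u j ∈ ymMatter D d' N) (j : Fin d') :
    ymBr (ymA ⟨0, hD⟩) (ymBr (ymA ⟨0, hD⟩) (ymPhi j)) ∈ ymSPreimage Γ u v hD := by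
  have hR : ymR' u j ∈ ymSPreimage Γ u v hD :=
    mem_ymSPreimage_of_ymRel hD ⟨Or.inr (Or.inl ⟨j, rfl⟩), rfl⟩
  rw [ymR'] at hR
  have hsum := (add_mem_cancel_right (ymMatter_le_ymSPreimage hD (hu j))).mp hR
  exact (mem_of_sum_mem_of_forall_ne_mem ⟨0, hD⟩ hsum fun i hi =>
    ymBr_mem (ymA_mem_ymSPreimage hD hi).1
      (ymBr_mem (ymA_mem_ymSPreimage hD hi).1 (ymPhi_mem_ymSPreimage hD j)) :)

theorem ymBr_ymA_zero_ymPsi_mem_ymSPreimage (hv : ∀ α, v α ∈ ymMatter D d' N)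
    (hΓ1 : Γ ⟨0, hD⟩ = 1) (α : Fin N) :
    ymBr (ymA ⟨0, hD⟩) (ymPsi α) ∈ ymSPreimage Γ u v hD := by
  have hR : ymR'' Γ v α ∈ ymSPreimage Γ u v hD :=
    mem_ymSPreimage_of_ymRel hD ⟨Or.inr (Or.inr ⟨α, rfl⟩), rfl⟩
  rw [ymR''] at hR
  have hzero := mem_of_sum_mem_of_forall_ne_mem ⟨0, hD⟩
    ((add_mem_cancel_right (ymMatter_le_ymSPreimage hD (hv α))).mp hR) fun i hi =>
      sum_mem fun β _ => Subalgebra.smul_mem _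
        (ymBr_mem (ymA_mem_ymSPreimage hD hi).1 (ymPsi_mem_ymSPreimage hD β)) _
  simpa [hΓ1, Matrix.one_apply, ite_smul] using hzero

end Preimage

/-- assume `D ≥ 1` and `Γ^1 = Id`.  Then the inner derivation `[a_1, ·]`
of `YM₀` maps the unital subalgebra `S` generated by all
`q_i, p^i, f_j, P^j, s^α` into itself. -/
theorem statement13
    (D d' N : ℕ) (hD : 0 < D)
    (Γ : Fin D → Matrix (Fin N) (Fin N) ℂ)
    (u : Fin d' → YMFree D d' N) (v : Fin N → YMFree D d' N)
    (hu : ∀ j, u j ∈ ymMatter D d' N) (hv : ∀ α, v α ∈ ymMatter D d' N)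
    (hΓ1 : Γ ⟨0, hD⟩ = (1 : Matrix (Fin N) (Fin N) ℂ)) :
    ∀ x ∈ Algebra.adjoin ℂ (ymSGen Γ u v hD),
      ymPi Γ u v (ymA ⟨0, hD⟩) * x - x * ymPi Γ u v (ymA ⟨0, hD⟩)
        ∈ Algebra.adjoin ℂ (ymSGen Γ u v hD) := by
  refine fun x => commutator_mem_adjoin_of_forall_mem ?_
  have hsucc (i : Fin (D - 1)) : (⟨(i : ℕ) + 1, Nat.add_lt_of_lt_sub i.2⟩ : Fin D) ≠ ⟨0, hD⟩ :=
    Fin.ne_of_val_ne i.val.succ_ne_zero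
  rintro _ ((((⟨i, rfl⟩ | ⟨i, rfl⟩) | ⟨j, rfl⟩) | ⟨j, rfl⟩) | ⟨α, rfl⟩) <;>
    rw [← ymPi_ymBr, ← Subalgebra.mem_comap, ← ymSPreimage]
  · exact (ymA_mem_ymSPreimage hD (hsucc i)).2
  · exact ymBr_ymA_zero_ymBr_ymA_mem_ymSPreimage hD (hsucc i)
  · exact ymBr_ymA_zero_ymPhi_mem_ymSPreimage hD j
  · exact ymBr_ymA_zero_ymBr_ymA_zero_ymPhi_mem_ymSPreimage hD hu j
  · exact ymBr_ymA_zero_ymPsi_mem_ymSPreimage hD hv hΓ1 α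
end
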